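/- arXiv:0711.0906 — 10 statements merged into one kernel-verified Lean document; each statement's English description precedes it below -/
import Mathlib

section
/- Let B : ℕ → ℕ → ℕ satisfy: B(1,0)=1; for all n>1 and 0≤k<n, B(n,k)=∑_{i=0}^{k} B(n−1,i); and B(n,k)=0 whenever k≥n. Then for every positive integer n, ∑_{k=0}^{n−1} B(n,k) = C(n), where C(n) = (1/(n+1))·binom(2n,n) is the n-th Catalan number; equivalently (n+1)·∑_{k=0}^{n−1} B(n,k) = binom(2n,n). -/
/-!
Multiplying by `n + 1` to stay in `ℕ`, the entries of the array are the ballot numbers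
`(n + 1) * B (n + 1) k = (n + 1 - k) * (n + k).choose k`. This follows by induction on the row
from a closed form for the partial sums of the ballot numbers, itself proved by induction using
Pascal's rule and `(k + 1) * m.choose (k + 1) = (m - k) * m.choose k`. The row sum of row `n` is
the last entry `B (n + 1) n` of the next row, which is `(2n).choose n / (n + 1)`.
-/

open Finset

theorem mul_sum_range_ballot (n k : ℕ) (hk : k ≤ n + 1) :
    (n + 2) * ∑ i ∈ range (k + 1), (n + 1 - i) * (n + i).choose i
      = (n + 1) * (n + 2 - k) * (n + 1 + k).choose k := by
  induction k with
  | zero => simp [mul_comm]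
  | succ k ih =>
    have hpascal : (n + 1 + (k + 1)).choose (k + 1)
        = (n + 1 + k).choose k + (n + 1 + k).choose (k + 1) :=
      Nat.choose_succ_succ _ _
    have habsorb :
        ((n + 1 + k).choose (k + 1) : ℤ) * (k + 1) = (n + 1 + k).choose k * (n + 1) := by
      exact_mod_cast by simpa using Nat.choose_succ_right_eq (n + 1 + k) k
    rw [sum_range_succ, mul_add, ih (by omega), show n + (k + 1) = n + 1 + k by ring, hpascal]
    zify [show k ≤ n + 2 by omega, show k + 1 ≤ n + 1 by omega, show k + 1 ≤ n + 2 by omega]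
    linear_combination -habsorb

section BallotArray

variable {B : ℕ → ℕ → ℕ}

theorem succ_mul_eq_ballot (hB1 : B 1 0 = 1)
    (hrec : ∀ n k, 1 < n → k < n → B n k = ∑ i ∈ range (k + 1), B (n - 1) i)
    (hzero : ∀ n k, n ≤ k → B n k = 0) (n : ℕ) :
    ∀ k ≤ n + 1, (n + 1) * B (n + 1) k = (n + 1 - k) * (n + k).choose k := by
  induction n with
  | zero =>
    intro k hk
    interval_cases k
    · simpa using hB1
    · simp [hzero]
  | succ n ih =>
    intro k hk
    rcases hk.lt_or_eq with hk | rfl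
    · have hrow : B (n + 2) k = ∑ i ∈ range (k + 1), B (n + 1) i := hrec (n + 2) k (by omega) hk
      have hscaled : (n + 1) * ((n + 2) * B (n + 2) k)
          = (n + 1) * ((n + 2 - k) * (n + 1 + k).choose k) := by
        calc (n + 1) * ((n + 2) * B (n + 2) k)
            = (n + 2) * ∑ i ∈ range (k + 1), (n + 1) * B (n + 1) i := by
              rw [hrow, mul_sum, mul_sum, mul_sum]
              exact sum_congr rfl fun _ _ => by ring
          _ = (n + 2) * ∑ i ∈ range (k + 1), (n + 1 - i) * (n + i).choose i := by
              congr 1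
              exact sum_congr rfl fun i hi => ih i (by simp at hi; omega)
          _ = (n + 1) * ((n + 2 - k) * (n + 1 + k).choose k) := by
              rw [mul_sum_range_ballot n k (by omega), mul_assoc]
      exact Nat.eq_of_mul_eq_mul_left n.succ_pos hscaled
    · simp [hzero]

theorem sum_row_eq_succ_row_last
    (hrec : ∀ n k, 1 < n → k < n → B n k = ∑ i ∈ range (k + 1), B (n - 1) i)
    (hzero : ∀ n k, n ≤ k → B n k = 0) {n : ℕ} (hn : 0 < n) :
    ∑ k ∈ range n, B n k = B (n + 1) n := by
  rw [hrec (n + 1) n (by omega) (by omega), Nat.add_sub_cancel, sum_range_succ,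
    hzero n n le_rfl, add_zero]

end BallotArray

/-- The row sums of the ballot-number array `B` are the Catalan numbers:
`(n+1) * ∑_{k=0}^{n-1} B n k = binom(2n, n)` for every positive `n`. -/
theorem catalan_triangle_row_sum
    (B : ℕ → ℕ → ℕ)
    (hB1 : B 1 0 = 1)
    (hrec : ∀ n k, 1 < n → k < n → B n k = ∑ i ∈ Finset.range (k + 1), B (n - 1) i)
    (hzero : ∀ n k, n ≤ k → B n k = 0) :
    ∀ n : ℕ, 0 < n →
      (n + 1) * (∑ k ∈ Finset.range n, B n k) = Nat.choose (2 * n) n := by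
  intro n hn
  rw [sum_row_eq_succ_row_last hrec hzero hn, succ_mul_eq_ballot hB1 hrec hzero n n (by omega),
    Nat.add_sub_cancel_left, one_mul, two_mul]
end

section
/- Let B : ℕ → ℕ → ℕ satisfy: B(1,0)=1; for all n>1 and 0≤k<n, B(n,k)=∑_{i=0}^{k} B(n−1,i); and B(n,k)=0 whenever k≥n. Then for all integers 0≤k<n one has the closed formula B(n,k) = ((n−k)/(n+k))·binom(n+k,n); equivalently (n+k)·B(n,k) = (n−k)·binom(n+k,n). -/
/-!
On the triangle `k ≤ n`, the array `B` is determined by `B (n+1) 0 = 1`, `B n n = 0` and the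
Pascal-type recurrence `B (n+1) (k+1) = B (n+1) k + B n (k+1)` for `k < n`, obtained by differencing
two consecutive partial sums. The rational closed form `(n - k) / (n + k) * C(n+k, n)` satisfies
the same three conditions, by Pascal's rule and `C(m, n+1) * (n+1) = C(m, n) * (m - n)`.
-/

def ballot (n k : ℕ) : ℚ := (n - k) / (n + k) * (n + k).choose n

lemma ballot_succ_zero (n : ℕ) : ballot (n + 1) 0 = 1 := by
  simp [ballot, Nat.cast_add_one_ne_zero n]

lemma ballot_self (n : ℕ) : ballot n n = 0 := by
  simp [ballot]

lemma ballot_succ_succ (n k : ℕ) :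
    ballot (n + 1) (k + 1) = ballot (n + 1) k + ballot n (k + 1) := by
  have hmul : ((n + k + 1).choose (n + 1) : ℚ) * (n + 1) = (n + k + 1).choose n * (k + 1) := by
    have := (n + k + 1).choose_succ_right_eq n
    rw [show n + k + 1 - n = k + 1 by omega] at this
    exact_mod_cast this
  have hpascal : ((n + k + 2).choose (n + 1) : ℚ) =
      (n + k + 1).choose n + (n + k + 1).choose (n + 1) := by
    exact_mod_cast (n + k + 1).choose_succ_succ' n
  simp only [ballot, Nat.cast_add, Nat.cast_one, show n + 1 + (k + 1) = n + k + 2 by ring,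
    show n + 1 + k = n + k + 1 by ring, show n + (k + 1) = n + k + 1 by ring]
  rw [hpascal]
  field_simp
  linear_combination (-(2 * n + 2 * k + 2) : ℚ) * hmul

lemma eq_ballot_of_pascal (f : ℕ → ℕ → ℚ) (hzero : ∀ n, f (n + 1) 0 = 1) (hdiag : ∀ n, f n n = 0)
    (hstep : ∀ n k, k < n → f (n + 1) (k + 1) = f (n + 1) k + f n (k + 1)) :
    ∀ n k, k ≤ n → f n k = ballot n k := by
  intro n
  induction n with
  | zero =>
    intro k hk
    obtain rfl : k = 0 := by omega
    rw [hdiag, ballot_self]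
  | succ n ihn =>
    intro k hk
    induction k with
    | zero => rw [hzero, ballot_succ_zero]
    | succ k ihk =>
      obtain hkn | hkn : k = n ∨ k < n := by omega
      · rw [hkn, hdiag, ballot_self]
      · rw [hstep n k hkn, ballot_succ_succ, ihk (by omega), ihn (k + 1) hkn]

structure IsBallotArray (B : ℕ → ℕ → ℕ) : Prop where
  one_zero : B 1 0 = 1
  eq_sum : ∀ n k, 1 < n → k < n → B n k = ∑ i ∈ Finset.range (k + 1), B (n - 1) i
  eq_zero_of_le : ∀ n k, n ≤ k → B n k = 0

namespace IsBallotArray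

variable {B : ℕ → ℕ → ℕ} (hB : IsBallotArray B)
include hB

lemma succ_zero (n : ℕ) : B (n + 1) 0 = 1 := by
  induction n with
  | zero => exact hB.one_zero
  | succ n ih => simpa [ih] using hB.eq_sum (n + 2) 0 (by omega) (by omega)

lemma succ_succ {n k : ℕ} (hk : k < n) : B (n + 1) (k + 1) = B (n + 1) k + B n (k + 1) := by
  rw [hB.eq_sum (n + 1) (k + 1) (by omega) (by omega), hB.eq_sum (n + 1) k (by omega) (by omega),
    Finset.sum_range_succ, Nat.add_sub_cancel]

lemma cast_eq_ballot {n k : ℕ} (hk : k ≤ n) : (B n k : ℚ) = ballot n k :=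
  eq_ballot_of_pascal (fun n k ↦ B n k) (fun n ↦ by simp [hB.succ_zero n])
    (fun n ↦ by simp [hB.eq_zero_of_le n n le_rfl])
    (fun n k hk ↦ by simp [hB.succ_succ hk]) n k hk

end IsBallotArray

/-- Closed formula for ballot numbers:
for `0 ≤ k < n`, `(n + k) * B n k = (n - k) * binom(n + k, n)`. -/
theorem ballot_number_closed_formula
    (B : ℕ → ℕ → ℕ)
    (hB1 : B 1 0 = 1)
    (hrec : ∀ n k, 1 < n → k < n → B n k = ∑ i ∈ Finset.range (k + 1), B (n - 1) i)
    (hzero : ∀ n k, n ≤ k → B n k = 0) :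
    ∀ n k : ℕ, k < n →
      (n + k) * B n k = (n - k) * Nat.choose (n + k) n := by
  intro n k hk
  have hB : (B n k : ℚ) = ballot n k := IsBallotArray.cast_eq_ballot ⟨hB1, hrec, hzero⟩ hk.le
  have hnk : (n + k : ℚ) ≠ 0 := by norm_cast; omega
  rw [ballot, div_mul_eq_mul_div, eq_div_iff hnk] at hB
  qify [hk.le]
  linarith
end

section
/- Let B : ℕ → ℕ → ℕ satisfy: B(1,0)=1; for all n>1 and 0≤k<n, B(n,k)=∑_{i=0}^{k} B(n−1,i); and B(n,k)=0 whenever k≥n. For 0≤k<n, B(n,k) equals the number of Dyck paths of length 2n whose maximal final run of consecutive down steps has length exactly n−k. -/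
/-!
Let `D(n, m)` be the set of Dyck paths of length `2n` whose final descent has length exactly `m`.
For `m ≥ 1` a path in `D(n + 1, m)` is `u ++ [1, -1] ++ (-1)^(m-1)`, and deleting its last peak
`[1, -1]` yields `u ++ (-1)^(m-1)`, which is an arbitrary Dyck path of length `2n` with final
descent at least `m - 1`: both families are parametrised by the nonnegative paths `u` of length
`2n + 1 - m` ending at height `m - 1`. Hence `#D(n + 1, m) = ∑_{r ≥ m - 1} #D(n, r)`, which for
`m = n + 1 - k` is the recurrence defining `B`.
-/

lemma Set.ncard_sep_le_eq_add {α : Type*} {s : Set α} (hs : s.Finite) (f : α → ℕ) (j : ℕ) :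
    {x ∈ s | j ≤ f x}.ncard = {x ∈ s | f x = j}.ncard + {x ∈ s | j + 1 ≤ f x}.ncard := by
  rw [← Set.ncard_union_eq _ (hs.subset (Set.sep_subset _ _)) (hs.subset (Set.sep_subset _ _))]
  · congr 1
    ext x
    simp only [Set.mem_sep_iff, Set.mem_union, ← and_or_left]
    exact and_congr_right fun _ => by constructor <;> intro h <;> omega
  · exact Set.disjoint_left.2 fun x hx hx' => by have := hx.2; have := hx'.2; omega

namespace DyckPath

open List

def IsNonnegPath (w : List ℤ) : Prop :=
  (∀ x ∈ w, x = 1 ∨ x = -1) ∧ ∀ j, 0 ≤ (w.take j).sum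

def nonnegPaths (L : ℕ) (h : ℤ) : Set (List ℤ) :=
  {w | w.length = L ∧ IsNonnegPath w ∧ w.sum = h}

def finalDescent (w : List ℤ) : ℕ :=
  (w.reverse.takeWhile (fun x => decide (x = -1))).length

lemma finalDescent_append_replicate (u : List ℤ) (j : ℕ) :
    finalDescent (u ++ replicate j (-1)) = finalDescent u + j := by
  simp [finalDescent, add_comm]

lemma finalDescent_append_one_cons_replicate (u : List ℤ) (m : ℕ) :
    finalDescent (u ++ 1 :: replicate m (-1)) = m := by
  rw [← singleton_append, ← append_assoc, finalDescent_append_replicate]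
  simp [finalDescent]

lemma eq_dropWhile_append_replicate_finalDescent (w : List ℤ) :
    w = (w.reverse.dropWhile (fun x => decide (x = -1))).reverse ++
      replicate (finalDescent w) (-1) := by
  have htake : w.reverse.takeWhile (fun x => decide (x = -1)) =
      replicate (finalDescent w) (-1) :=
    eq_replicate_iff.2 ⟨rfl, fun x hx => by simpa using mem_takeWhile_imp hx⟩
  conv_lhs => rw [← reverse_reverse w, ← takeWhile_append_dropWhile (l := w.reverse)
    (p := fun x => decide (x = -1)), htake]
  simp

lemma le_finalDescent_iff {w : List ℤ} {j : ℕ} :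
    j ≤ finalDescent w ↔ ∃ u, w = u ++ replicate j (-1) := by
  constructor
  · intro h
    refine ⟨(w.reverse.dropWhile (fun x => decide (x = -1))).reverse ++
      replicate (finalDescent w - j) (-1), ?_⟩
    rw [append_assoc, ← replicate_add, Nat.sub_add_cancel h]
    exact eq_dropWhile_append_replicate_finalDescent w
  · rintro ⟨u, rfl⟩
    rw [finalDescent_append_replicate]
    omega

lemma exists_eq_append_one_cons_replicate_finalDescent {w : List ℤ}
    (hw : ∀ x ∈ w, x = 1 ∨ x = -1) (hlt : finalDescent w < w.length) :
    ∃ u, w = u ++ 1 :: replicate (finalDescent w) (-1) := by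
  have hdecomp := eq_dropWhile_append_replicate_finalDescent w
  have hhead := head?_dropWhile_not (fun x => decide (x = -1)) w.reverse
  rcases hdrop : w.reverse.dropWhile (fun x => decide (x = -1)) with _ | ⟨x, d⟩
  · rw [hdrop] at hdecomp
    have := congrArg length hdecomp
    simp at this
    omega
  · rw [hdrop] at hdecomp hhead
    have hxw : x ∈ w := by
      have : x ∈ w.reverse.dropWhile (fun x => decide (x = -1)) := hdrop ▸ mem_cons_self
      simpa using (dropWhile_sublist _).mem this
    have hx : x = 1 := (hw x hxw).resolve_right (by simpa using hhead)
    exact ⟨d.reverse, by simpa [hx] using hdecomp⟩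

lemma IsNonnegPath.sum_nonneg {w : List ℤ} (hw : IsNonnegPath w) : 0 ≤ w.sum := by
  simpa using hw.2 w.length

lemma isNonnegPath_append {u v : List ℤ} :
    IsNonnegPath (u ++ v) ↔
      IsNonnegPath u ∧ (∀ x ∈ v, x = 1 ∨ x = -1) ∧ ∀ j, 0 ≤ u.sum + (v.take j).sum := by
  constructor
  · rintro ⟨hpm, hpre⟩
    refine ⟨⟨fun x hx => hpm x (mem_append_left _ hx), fun j => ?_⟩,
      fun x hx => hpm x (mem_append_right _ hx),
      fun j => by simpa [take_append, take_of_length_le] using hpre (u.length + j)⟩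
    rcases le_total j u.length with h | h
    · simpa [take_append, Nat.sub_eq_zero_of_le h] using hpre j
    · simpa [take_of_length_le h] using hpre u.length
  · rintro ⟨⟨hpm, hpre⟩, hv, hsum⟩
    refine ⟨fun x hx => (mem_append.1 hx).elim (hpm x) (hv x), fun j => ?_⟩
    rw [take_append, sum_append]
    rcases le_total j u.length with h | h
    · simpa [Nat.sub_eq_zero_of_le h] using hpre j
    · rw [take_of_length_le h]
      exact hsum _

lemma isNonnegPath_append_replicate {u : List ℤ} {j : ℕ} :
    IsNonnegPath (u ++ replicate j (-1)) ↔ IsNonnegPath u ∧ (j : ℤ) ≤ u.sum := by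
  rw [isNonnegPath_append]
  simp only [mem_replicate, take_replicate, sum_replicate, smul_neg, nsmul_eq_mul, mul_one]
  refine and_congr_right fun _ =>
    ⟨fun h => by simpa using h.2 j, fun h => ⟨by simp, fun i => ?_⟩⟩
  have : min i j ≤ j := min_le_right i j
  omega

lemma isNonnegPath_append_one {u : List ℤ} : IsNonnegPath (u ++ [1]) ↔ IsNonnegPath u := by
  rw [isNonnegPath_append]
  refine ⟨fun h => h.1, fun hu => ⟨hu, by simp, fun j => ?_⟩⟩
  have := hu.sum_nonneg
  rcases j with _ | j <;> simp <;> omega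

lemma nonnegPaths_eq_empty_of_neg {L : ℕ} {h : ℤ} (hneg : h < 0) : nonnegPaths L h = ∅ :=
  Set.eq_empty_of_forall_notMem fun _ ⟨_, hw, hsum⟩ => by
    have := hw.sum_nonneg
    omega

lemma nonnegPaths_eq_empty_of_length_lt {L : ℕ} {h : ℤ} (hL : (L : ℤ) < h) :
    nonnegPaths L h = ∅ :=
  Set.eq_empty_of_forall_notMem fun w ⟨hlen, hw, hsum⟩ => by
    have := sum_le_card_nsmul w 1 fun x hx => by rcases hw.1 x hx with rfl | rfl <;> norm_num
    simp only [hlen, nsmul_eq_mul, mul_one] at this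
    omega

lemma nonnegPaths_zero_zero : nonnegPaths 0 0 = {[]} := by
  ext w
  simp only [nonnegPaths, Set.mem_ofPred_eq, Set.mem_singleton_iff]
  constructor
  · exact fun h => length_eq_zero_iff.1 h.1
  · rintro rfl
    exact ⟨rfl, ⟨by simp, by simp⟩, rfl⟩

lemma nonnegPaths_finite (L : ℕ) (h : ℤ) : (nonnegPaths L h).Finite := by
  let step : Bool → ℤ := fun b => if b then 1 else -1
  refine ((finite_length_eq Bool L).image (map step)).subset fun w ⟨hlen, hw, _⟩ => ?_
  refine ⟨w.map (fun x => decide (x = 1)), by simpa using hlen, ?_⟩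
  rw [map_map]
  conv_rhs => rw [← map_id w]
  refine map_congr_left fun x hx => ?_
  rcases hw.1 x hx with rfl | rfl <;> simp [step]

lemma append_replicate_mem_nonnegPaths {u : List ℤ} {L j : ℕ} {h : ℤ} (h0 : 0 ≤ h) :
    u ++ replicate j (-1) ∈ nonnegPaths (L + j) h ↔ u ∈ nonnegPaths L (h + j) := by
  simp only [nonnegPaths, Set.mem_ofPred_eq, length_append, length_replicate,
    Nat.add_right_cancel_iff, isNonnegPath_append_replicate, sum_append, sum_replicate,
    smul_neg, nsmul_eq_mul, mul_one]
  constructor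
  · rintro ⟨hlen, ⟨hu, -⟩, hsum⟩
    exact ⟨hlen, hu, by omega⟩
  · rintro ⟨hlen, hu, hsum⟩
    exact ⟨hlen, ⟨hu, by omega⟩, by omega⟩

lemma append_one_mem_nonnegPaths {u : List ℤ} {L : ℕ} {h : ℤ} :
    u ++ [1] ∈ nonnegPaths (L + 1) h ↔ u ∈ nonnegPaths L (h - 1) := by
  simp only [nonnegPaths, Set.mem_ofPred_eq, length_append, length_singleton,
    Nat.add_right_cancel_iff, isNonnegPath_append_one, sum_append, sum_singleton]
  exact and_congr_right fun _ => and_congr_right fun _ => by omega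

lemma append_one_cons_replicate_mem_nonnegPaths {u : List ℤ} {L m : ℕ} :
    u ++ 1 :: replicate m (-1) ∈ nonnegPaths (L + 1 + m) 0 ↔ u ∈ nonnegPaths L (m - 1) := by
  rw [← singleton_append, ← append_assoc, append_replicate_mem_nonnegPaths le_rfl, zero_add,
    append_one_mem_nonnegPaths]

lemma setOf_le_finalDescent_eq_image (L j : ℕ) :
    {w ∈ nonnegPaths (L + j) 0 | j ≤ finalDescent w} =
      (· ++ replicate j (-1)) '' nonnegPaths L j := by
  ext w
  constructor
  · rintro ⟨hw, hj⟩
    obtain ⟨u, rfl⟩ := le_finalDescent_iff.1 hj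
    exact ⟨u, by simpa using (append_replicate_mem_nonnegPaths le_rfl).1 hw, rfl⟩
  · rintro ⟨u, hu, rfl⟩
    exact ⟨(append_replicate_mem_nonnegPaths le_rfl).2 (by simpa using hu),
      le_finalDescent_iff.2 ⟨u, rfl⟩⟩

lemma setOf_finalDescent_eq_image (L m : ℕ) :
    {w ∈ nonnegPaths (L + 1 + m) 0 | finalDescent w = m} =
      (· ++ 1 :: replicate m (-1)) '' nonnegPaths L (m - 1) := by
  ext w
  constructor
  · rintro ⟨hw, hm⟩
    obtain ⟨u, hu⟩ := exists_eq_append_one_cons_replicate_finalDescent hw.2.1.1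
      (by rw [hm, hw.1]; omega)
    rw [hm] at hu
    subst hu
    exact ⟨u, append_one_cons_replicate_mem_nonnegPaths.1 hw, rfl⟩
  · rintro ⟨u, hu, rfl⟩
    exact ⟨append_one_cons_replicate_mem_nonnegPaths.2 hu,
      finalDescent_append_one_cons_replicate u m⟩

lemma ncard_finalDescent_eq_succ (L j : ℕ) :
    {w ∈ nonnegPaths (L + 1 + (j + 1)) 0 | finalDescent w = j + 1}.ncard =
      {w ∈ nonnegPaths (L + j) 0 | j ≤ finalDescent w}.ncard := by
  rw [setOf_finalDescent_eq_image, setOf_le_finalDescent_eq_image,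
    Set.ncard_image_of_injective _ (append_left_injective _),
    Set.ncard_image_of_injective _ (append_left_injective _)]
  push_cast
  rw [add_sub_cancel_right]

lemma setOf_succ_le_finalDescent_eq_empty {n : ℕ} (hn : 1 ≤ n) :
    {w ∈ nonnegPaths (2 * n) 0 | n + 1 ≤ finalDescent w} = ∅ := by
  rw [show 2 * n = (n - 1) + (n + 1) by omega, setOf_le_finalDescent_eq_image,
    nonnegPaths_eq_empty_of_length_lt (by omega), Set.image_empty]

-- Indexed like `B`: the truncation of `n - k` makes it vanish for `k ≥ n ≥ 1`, as `B` does.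
noncomputable def dyckCount (n k : ℕ) : ℕ :=
  {w ∈ nonnegPaths (2 * n) 0 | finalDescent w = n - k}.ncard

lemma dyckCount_one_zero : dyckCount 1 0 = 1 := by
  rw [dyckCount, show 2 * 1 = 0 + 1 + 1 from rfl, setOf_finalDescent_eq_image]
  simp [nonnegPaths_zero_zero]

lemma dyckCount_eq_zero_of_le {n k : ℕ} (hn : 1 ≤ n) (hk : n ≤ k) : dyckCount n k = 0 := by
  rw [dyckCount, Nat.sub_eq_zero_of_le hk, show 2 * n = (2 * n - 1) + 1 + 0 by omega,
    setOf_finalDescent_eq_image, nonnegPaths_eq_empty_of_neg (by norm_num), Set.image_empty,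
    Set.ncard_empty]

lemma ncard_le_finalDescent_eq_sum_dyckCount {n : ℕ} (hn : 1 ≤ n) {k : ℕ} (hk : k ≤ n) :
    {w ∈ nonnegPaths (2 * n) 0 | n - k ≤ finalDescent w}.ncard =
      ∑ i ∈ Finset.range (k + 1), dyckCount n i := by
  induction k with
  | zero =>
    rw [Set.ncard_sep_le_eq_add (nonnegPaths_finite _ _), Nat.sub_zero,
      setOf_succ_le_finalDescent_eq_empty hn, Set.ncard_empty, Finset.sum_range_one]
    rfl
  | succ k ih =>
    rw [Set.ncard_sep_le_eq_add (nonnegPaths_finite _ _), show n - (k + 1) + 1 = n - k by omega,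
      ih (by omega), Finset.sum_range_succ _ (k + 1), add_comm]
    rfl

lemma dyckCount_succ {n k : ℕ} (hn : 1 ≤ n) (hk : k ≤ n) :
    dyckCount (n + 1) k = ∑ i ∈ Finset.range (k + 1), dyckCount n i := by
  obtain ⟨L, hL⟩ : ∃ L, 2 * n = L + (n - k) := ⟨2 * n - (n - k), by omega⟩
  rw [← ncard_le_finalDescent_eq_sum_dyckCount hn hk, dyckCount,
    show n + 1 - k = n - k + 1 by omega, show 2 * (n + 1) = L + 1 + (n - k + 1) by omega, hL,
    ncard_finalDescent_eq_succ]

end DyckPath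

/-- For `0 ≤ k < n`, the ballot number `B n k` counts the Dyck paths of
length `2n` (sequences of `±1` steps with nonnegative partial sums and total sum `0`)
whose maximal final run of consecutive down steps has length exactly `n - k`. -/
theorem ballot_number_counts_dyck_paths
    (B : ℕ → ℕ → ℕ)
    (hB1 : B 1 0 = 1)
    (hrec : ∀ n k, 1 < n → k < n → B n k = ∑ i ∈ Finset.range (k + 1), B (n - 1) i)
    (hzero : ∀ n k, n ≤ k → B n k = 0) :
    ∀ n k : ℕ, k < n →
      B n k = Set.ncard {w : List ℤ |
        w.length = 2 * n ∧
        (∀ x ∈ w, x = 1 ∨ x = -1) ∧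
        (∀ j : ℕ, 0 ≤ (w.take j).sum) ∧
        w.sum = 0 ∧
        (w.reverse.takeWhile (fun x => decide (x = -1))).length = n - k} := by
  have hcount : ∀ n, 1 ≤ n → ∀ k, B n k = DyckPath.dyckCount n k := by
    intro n hn
    induction n, hn using Nat.le_induction with
    | base =>
      rintro (_ | k)
      · rw [hB1, DyckPath.dyckCount_one_zero]
      · rw [hzero 1 (k + 1) (by omega), DyckPath.dyckCount_eq_zero_of_le le_rfl (by omega)]
    | succ n hn ih =>
      intro k
      rcases le_or_gt k n with hk | hk
      · rw [hrec (n + 1) k (by omega) (by omega), DyckPath.dyckCount_succ hn hk,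
          Nat.add_sub_cancel]
        exact Finset.sum_congr rfl fun i _ => ih i
      · rw [hzero _ _ hk, DyckPath.dyckCount_eq_zero_of_le (by omega) hk]
  intro n k hk
  rw [hcount n (by omega) k, DyckPath.dyckCount]
  congr 1
  ext w
  simp only [DyckPath.nonnegPaths, DyckPath.IsNonnegPath, DyckPath.finalDescent,
    Set.mem_ofPred_eq, and_assoc]
end

section
/- Let B₃ : ℕ → ℕ → ℕ → ℕ satisfy: B₃(1,0,0)=1; for all n>1 and k+l<n, B₃(n,k,l)=∑_{i=0}^{k}∑_{j=0}^{l} B₃(n−1,i,j); and B₃(n,k,l)=0 whenever k+l≥n. Then for every positive integer n, ∑_{k,l≥0} B₃(n,k,l) = C₃(n), where C₃(n) = (1/(2n+1))·binom(3n,n); equivalently (2n+1)·∑_{k,l} B₃(n,k,l) = binom(3n,n). -/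
/-!
With `n = p + 1`, induction on `p` gives `n * B₃(n,k,l) = (n-k-l) * C(p+k,k) * C(p+l,l)`:
in the rectangle sum of the recursion the weight `n-i-j` splits into a part depending on `i`
and one depending on `j`, so the double sum factors into the hockey-stick sums
`∑ C(p+i,i)` and `∑ (m+1-i) C(p+i,i)`. Summing the closed form over the slice gives
`∑_k C(p+k,k) C(2p+2-k,p-k) = C(3n,p) = n/(2n+1) * C(3n,n)`. All these sums are instances of
Chu–Vandermonde at negative integers: `∑_{i+j=m} C(a+i,i) C(b+j,j) = C(a+b+1+m,m)`.
-/

open Finset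

theorem Ring.choose_neg_natCast_add_one (c i : ℕ) :
    Ring.choose (-((c : ℤ) + 1)) i = (-1) ^ i * ((c + i).choose i : ℤ) := by
  rw [Ring.choose_neg, show (c : ℤ) + 1 + i - 1 = ((c + i : ℕ) : ℤ) by push_cast; ring,
    Ring.choose_natCast]
  simp [Units.smul_def, Int.negOnePow_def]

theorem Nat.sum_range_add_choose_mul_add_choose (a b m : ℕ) :
    ∑ i ∈ range (m + 1), (a + i).choose i * (b + (m - i)).choose (m - i)
      = (a + b + 1 + m).choose m := by
  have h := Ring.add_choose_eq (r := -((a : ℤ) + 1)) (s := -((b : ℤ) + 1)) m (Commute.all _ _)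
  rw [show -((a : ℤ) + 1) + -((b : ℤ) + 1) = -(((a + b + 1 : ℕ) : ℤ) + 1) by push_cast; ring,
    Finset.Nat.sum_antidiagonal_eq_sum_range_succ
      (fun i j => Ring.choose (-((a : ℤ) + 1)) i * Ring.choose (-((b : ℤ) + 1)) j)] at h
  simp only [Ring.choose_neg_natCast_add_one] at h
  have hsign : ∀ i ∈ range (m + 1),
      (-1 : ℤ) ^ i * ((a + i).choose i : ℤ) * ((-1) ^ (m - i) * ((b + (m - i)).choose (m - i) : ℤ))
        = (-1) ^ m * ((a + i).choose i * (b + (m - i)).choose (m - i) : ℕ) := by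
    intro i hi
    rw [← Nat.add_sub_of_le (Nat.lt_succ_iff.mp (mem_range.mp hi)), Nat.add_sub_cancel_left,
      pow_add]
    push_cast
    ring
  rw [sum_congr rfl hsign, ← mul_sum] at h
  exact_mod_cast (mul_left_cancel₀ (pow_ne_zero m (by norm_num : (-1 : ℤ) ≠ 0)) h).symm

theorem Nat.sum_range_sub_mul_add_choose (a : ℕ) {m n : ℕ} (h : m < n) :
    ∑ i ∈ range n, (m + 1 - i) * (a + i).choose i = (a + 2 + m).choose m := by
  rw [← sum_subset (range_subset_range.mpr h) fun i _ hi => by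
    rw [show m + 1 - i = 0 by simp only [mem_range] at hi; omega, zero_mul]]
  rw [← Nat.sum_range_add_choose_mul_add_choose a 1 m]
  refine sum_congr rfl fun i hi => ?_
  rw [add_comm 1, Nat.choose_succ_self_right, mul_comm]
  have := mem_range.mp hi
  congr 1
  omega

theorem Finset.sum_sum_add_mul_mul {ι κ R : Type*} [CommSemiring R] (s : Finset ι)
    (t : Finset κ) (u f : ι → R) (v g : κ → R) :
    ∑ i ∈ s, ∑ j ∈ t, (u i + v j) * (f i * g j)
      = (∑ i ∈ s, u i * f i) * ∑ j ∈ t, g j + (∑ i ∈ s, f i) * ∑ j ∈ t, v j * g j := by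
  simp only [sum_mul_sum, ← sum_add_distrib]
  exact sum_congr rfl fun _ _ => sum_congr rfl fun _ _ => by ring

/-- `(p + 1) * B₃ (p + 1) k l`, in closed form. -/
def fussCatalanTetra (p k l : ℕ) : ℕ :=
  (p + 1 - k - l) * ((p + k).choose k * (p + l).choose l)

theorem add_two_mul_sum_sum_fussCatalanTetra {p k l : ℕ} (hkl : k + l ≤ p + 1) :
    (p + 2) * ∑ i ∈ range (k + 1), ∑ j ∈ range (l + 1), fussCatalanTetra p i j
      = (p + 1) * fussCatalanTetra (p + 1) k l := by
  set a : ℕ → ℤ := fun i => ((p + i).choose i : ℕ)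
  have hA (m : ℕ) : ∑ i ∈ range (m + 1), a i = ((p + 1 + m).choose m : ℕ) := by
    simpa [a] using congrArg (Nat.cast (R := ℤ)) (Nat.sum_range_add_choose_mul_add_choose p 0 m)
  have hW (m : ℕ) : ∑ i ∈ range (m + 1), ((m : ℤ) + 1 - i) * a i
      = ((p + 2 + m).choose m : ℕ) := by
    rw [← Nat.sum_range_sub_mul_add_choose p (Nat.lt_succ_self m)]
    push_cast
    refine sum_congr rfl fun i hi => ?_
    rw [Nat.cast_sub (mem_range.mp hi).le]
    push_cast
    ring
  have hWA (m : ℕ) :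
      ((p + 2 + m).choose m : ℤ) * (p + 2) = (p + 1 + m).choose m * (p + 2 + m) := by
    have := Nat.choose_mul_succ_eq (p + 1 + m) m
    rw [show p + 1 + m + 1 - m = p + 2 by omega, show p + 1 + m + 1 = p + 2 + m by ring] at this
    exact_mod_cast this.symm
  -- splitting the weight makes the double sum factor into one-dimensional sums
  have hsplit : ∀ i ∈ range (k + 1), ∀ j ∈ range (l + 1),
      ((fussCatalanTetra p i j : ℕ) : ℤ)
        = (((k : ℤ) + 1 - i + (p - 1 - k - l)) + ((l : ℤ) + 1 - j)) * (a i * a j) := by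
    intro i hi j hj
    simp only [mem_range] at hi hj
    simp only [fussCatalanTetra, a]
    rw [Nat.cast_mul, Nat.cast_sub (by omega), Nat.cast_sub (by omega)]
    push_cast
    ring
  apply Nat.cast_injective (R := ℤ)
  push_cast
  rw [sum_congr rfl fun i hi => sum_congr rfl (hsplit i hi), sum_sum_add_mul_mul]
  simp only [add_mul _ _ (a _), sum_add_distrib, ← mul_sum, hA, hW, fussCatalanTetra]
  rw [Nat.cast_mul, Nat.cast_sub (by omega), Nat.cast_sub (by omega)]
  push_cast
  linear_combination (p + 1 + l).choose l * hWA k + (p + 1 + k).choose k * hWA l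

theorem sum_sum_fussCatalanTetra (p : ℕ) :
    ∑ k ∈ range (p + 1), ∑ l ∈ range (p + 1), fussCatalanTetra p k l
      = (3 * (p + 1)).choose p := by
  have hrow : ∀ k ∈ range (p + 1), ∑ l ∈ range (p + 1), fussCatalanTetra p k l
      = (p + k).choose k * (p + 2 + (p - k)).choose (p - k) := by
    intro k hk
    have hk : k ≤ p := Nat.lt_succ_iff.mp (mem_range.mp hk)
    simp only [fussCatalanTetra, mul_left_comm _ ((p + k).choose k), ← mul_sum]
    rw [show p + 1 - k = p - k + 1 by omega, Nat.sum_range_sub_mul_add_choose p (by omega)]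
  rw [sum_congr rfl hrow, Nat.sum_range_add_choose_mul_add_choose]
  congr 1
  ring

theorem mul_eq_fussCatalanTetra (B₃ : ℕ → ℕ → ℕ → ℕ) (hB1 : B₃ 1 0 0 = 1)
    (hrec : ∀ n k l, 1 < n → k + l < n →
      B₃ n k l = ∑ i ∈ range (k + 1), ∑ j ∈ range (l + 1), B₃ (n - 1) i j)
    (hzero : ∀ n k l, n ≤ k + l → B₃ n k l = 0) (p k l : ℕ) :
    (p + 1) * B₃ (p + 1) k l = fussCatalanTetra p k l := by
  induction p generalizing k l with
  | zero =>
    rcases Nat.eq_zero_or_pos (k + l) with hkl | hkl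
    · obtain ⟨rfl, rfl⟩ : k = 0 ∧ l = 0 := by omega
      simp [hB1, fussCatalanTetra]
    · simp [hzero 1 k l hkl, fussCatalanTetra, show 1 - k - l = 0 by omega]
  | succ p ih =>
    by_cases hkl : k + l ≤ p + 1
    · apply Nat.eq_of_mul_eq_mul_left (Nat.add_one_pos p)
      calc (p + 1) * ((p + 1 + 1) * B₃ (p + 1 + 1) k l)
          = (p + 2) * ∑ i ∈ range (k + 1), ∑ j ∈ range (l + 1), (p + 1) * B₃ (p + 1) i j := by
            simp only [hrec (p + 1 + 1) k l (by omega) (by omega), Nat.add_sub_cancel, mul_sum]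
            ring_nf
        _ = (p + 1) * fussCatalanTetra (p + 1) k l := by
            simp only [ih, add_two_mul_sum_sum_fussCatalanTetra hkl]
    · simp [hzero (p + 1 + 1) k l (by omega), fussCatalanTetra,
        show p + 1 + 1 - k - l = 0 by omega]

theorem Nat.succ_mul_choose_three_mul (p : ℕ) :
    (p + 1) * (3 * (p + 1)).choose (p + 1) = (2 * (p + 1) + 1) * (3 * (p + 1)).choose p := by
  have h := Nat.choose_succ_right_eq (3 * (p + 1)) p
  rw [show 3 * (p + 1) - p = 2 * (p + 1) + 1 by omega] at h
  linarith

/-- The sums of the slices of the Fuss–Catalan tetrahedron `B₃` are the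
order-3 Fuss–Catalan numbers: `(2n+1) * ∑_{k,l} B₃ n k l = binom(3n, n)` for positive `n`.
(Since `B₃ n k l = 0` whenever `k + l ≥ n`, summing `k` and `l` over `{0,…,n-1}`
captures all nonzero terms.) -/
theorem fuss_catalan_tetrahedron_slice_sum
    (B₃ : ℕ → ℕ → ℕ → ℕ)
    (hB1 : B₃ 1 0 0 = 1)
    (hrec : ∀ n k l, 1 < n → k + l < n →
      B₃ n k l = ∑ i ∈ Finset.range (k + 1), ∑ j ∈ Finset.range (l + 1), B₃ (n - 1) i j)
    (hzero : ∀ n k l, n ≤ k + l → B₃ n k l = 0) :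
    ∀ n : ℕ, 0 < n →
      (2 * n + 1) * (∑ k ∈ Finset.range n, ∑ l ∈ Finset.range n, B₃ n k l)
        = Nat.choose (3 * n) n := by
  intro n hn
  obtain ⟨p, rfl⟩ : ∃ p, n = p + 1 := Nat.exists_eq_add_one.mpr hn
  have hslice : (p + 1) * ∑ k ∈ range (p + 1), ∑ l ∈ range (p + 1), B₃ (p + 1) k l
      = (3 * (p + 1)).choose p := by
    simp only [mul_sum, mul_eq_fussCatalanTetra B₃ hB1 hrec hzero, sum_sum_fussCatalanTetra]
  apply Nat.eq_of_mul_eq_mul_left (Nat.add_one_pos p)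
  rw [Nat.succ_mul_choose_three_mul, ← hslice]
  ring
end

section
/- Let B₃ : ℕ → ℕ → ℕ → ℕ satisfy: B₃(1,0,0)=1; for all n>1 and k+l<n, B₃(n,k,l)=∑_{i=0}^{k}∑_{j=0}^{l} B₃(n−1,i,j); and B₃(n,k,l)=0 whenever k+l≥n. Then for all n≥1 and k,l≥0 with k+l<n, B₃(n,k,l) equals the number of 2-Dyck paths of length 3n having exactly k down steps of even height and exactly l down steps of odd height, where down steps belonging to the maximal final run of consecutive down steps are not counted. -/
/-!
Write `U = 1` and `D = -2`. A 2-Dyck path `w` splits uniquely as `p ++ D^r` where `p`, its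
stripped part, does not end with `D`; the down steps that are counted are exactly those of `p`,
and for a path of semilength `n` with counts `k, l` one has `r = n - k - l`. So it suffices to
count stripped parts. The stripped part of a path of semilength `n + 1` ends with `U`, and
peeling off its last two up steps together with the runs of down steps before them writes it
uniquely as `q ++ D^a U D^b U`, with `q` the stripped part of a path of semilength `n`. As `q`
ends at an even height, the `a` down steps of `D^a` have even height and the `b` of `D^b` odd
height, so `q` has counts `k - a, l - b`; conversely any such `q` with `a ≤ k`, `b ≤ l` and
`k + l ≤ n` extends, since `q` ends at height `2 (n - (k - a) - (l - b)) ≥ 2 (a + b)`. This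
bijection is the recurrence defining `B₃`.
-/

namespace TwoDyck

open List

def StaysNonneg (h : ℤ) (w : List ℤ) : Prop := ∀ j, 0 ≤ h + (w.take j).sum

section StaysNonneg

variable {h : ℤ} {w : List ℤ}

theorem staysNonneg_zero_iff : StaysNonneg 0 w ↔ ∀ j : ℕ, 0 ≤ (w.take j).sum := by
  simp [StaysNonneg]

theorem StaysNonneg.nonneg (hw : StaysNonneg h w) : 0 ≤ h := by
  simpa using hw 0

theorem StaysNonneg.add_sum_nonneg (hw : StaysNonneg h w) : 0 ≤ h + w.sum := by
  simpa using hw w.length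

@[simp]
theorem staysNonneg_nil : StaysNonneg h [] ↔ 0 ≤ h := by
  simp [StaysNonneg]

@[simp]
theorem staysNonneg_cons {x : ℤ} : StaysNonneg h (x :: w) ↔ 0 ≤ h ∧ StaysNonneg (h + x) w := by
  refine ⟨fun hw => ⟨hw.nonneg, fun j => ?_⟩, fun ⟨h0, hw⟩ j => ?_⟩
  · simpa [add_assoc] using hw (j + 1)
  · cases j with
    | zero => simpa using h0
    | succ j => simpa [add_assoc] using hw j

@[simp]
theorem staysNonneg_append {p q : List ℤ} :
    StaysNonneg h (p ++ q) ↔ StaysNonneg h p ∧ StaysNonneg (h + p.sum) q := by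
  induction p generalizing h with
  | nil => simpa using fun hq : StaysNonneg h q => hq.nonneg
  | cons x p ih => simp [ih, and_assoc, add_assoc]

@[simp]
theorem staysNonneg_replicate {a : ℕ} : StaysNonneg h (replicate a (-2)) ↔ 2 * a ≤ h := by
  induction a generalizing h with
  | zero => simp
  | succ a ih => simp only [replicate_succ, staysNonneg_cons, ih]; push_cast; omega

end StaysNonneg

section Steps

variable {w : List ℤ}

theorem sum_eq_count_sub (hw : ∀ x ∈ w, x = 1 ∨ x = -2) :
    w.sum = w.count 1 - 2 * w.count (-2) := by
  induction w with
  | nil => simp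
  | cons x w ih =>
    rw [forall_mem_cons] at hw
    obtain ⟨rfl | rfl, hw⟩ := hw <;> simp [ih hw] <;> ring

theorem length_eq_count_add (hw : ∀ x ∈ w, x = 1 ∨ x = -2) :
    w.length = w.count 1 + w.count (-2) := by
  induction w with
  | nil => simp
  | cons x w ih =>
    rw [forall_mem_cons] at hw
    obtain ⟨rfl | rfl, hw⟩ := hw <;> simp [ih hw] <;> ring

theorem even_sum_of_even_count (hw : ∀ x ∈ w, x = 1 ∨ x = -2) (h : Even (w.count 1)) :
    Even w.sum := by
  obtain ⟨r, hr⟩ := h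
  exact ⟨r - w.count (-2), by rw [sum_eq_count_sub hw, hr]; push_cast; ring⟩

theorem exists_eq_append_one (hw : ∀ x ∈ w, x = 1 ∨ x = -2) (hlast : w.getLast? ≠ some (-2))
    (hne : w ≠ []) : ∃ q, w = q ++ [1] := by
  obtain rfl | ⟨q, x, rfl⟩ := eq_nil_or_concat w
  · exact absurd rfl hne
  · obtain rfl | rfl := hw x (by simp)
    · exact ⟨q, concat_eq_append⟩
    · simp at hlast

end Steps

section countDowns

variable (P : ℤ → Prop) [DecidablePred P]

def countDowns : ℤ → List ℤ → ℕ
  | _, [] => 0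
  | h, x :: w => (if x = -2 ∧ P (h + x) then 1 else 0) + countDowns (h + x) w

@[simp]
theorem countDowns_nil (h : ℤ) : countDowns P h [] = 0 := rfl

@[simp]
theorem countDowns_cons (h x : ℤ) (w : List ℤ) :
    countDowns P h (x :: w) = (if x = -2 ∧ P (h + x) then 1 else 0) + countDowns P (h + x) w :=
  rfl

@[simp]
theorem countDowns_append (h : ℤ) (p q : List ℤ) :
    countDowns P h (p ++ q) = countDowns P h p + countDowns P (h + p.sum) q := by
  induction p generalizing h with
  | nil => simp
  | cons x p ih => simp [ih, add_assoc]

theorem countDowns_replicate (hP : ∀ x, P (x + -2) ↔ P x) (h : ℤ) (a : ℕ) :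
    countDowns P h (replicate a (-2)) = if P h then a else 0 := by
  induction a generalizing h with
  | zero => simp
  | succ a ih => by_cases hh : P h <;> simp [replicate_succ, ih, hP, hh, add_comm 1]

end countDowns

theorem countDowns_even_add_countDowns_odd (h : ℤ) (w : List ℤ) :
    countDowns Even h w + countDowns Odd h w = w.count (-2) := by
  induction w generalizing h with
  | nil => rfl
  | cons x w ih =>
    rw [countDowns_cons, countDowns_cons, count_cons, ← ih (h + x)]
    obtain rfl | hx := eq_or_ne x (-2)
    · by_cases he : Even (h + -2) <;> simp [he, ← Int.not_even_iff_odd] <;> omega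
    · simp [hx]

def countDownsBefore (P : ℤ → Prop) [DecidablePred P] (w : List ℤ) (m : ℕ) : ℕ :=
  ((Finset.range m).filter (fun j => w.getD j 0 = -2 ∧ P ((w.take (j + 1)).sum))).card

theorem countDownsBefore_eq_countDowns_take (P : ℤ → Prop) [DecidablePred P] (w : List ℤ)
    (m : ℕ) : countDownsBefore P w m = countDowns P 0 (w.take m) := by
  induction m with
  | zero => simp [countDownsBefore]
  | succ m ih =>
    have hsum : (w.take (m + 1)).sum = (w.take m).sum + w[m]?.toList.sum := by
      rw [take_add_one, sum_append]
    rw [countDownsBefore, Finset.range_add_one, Finset.filter_insert, hsum, take_add_one,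
      countDowns_append, ← ih, countDownsBefore, getD_eq_getElem?_getD]
    cases w[m]? with
    | none => simp
    | some x =>
      simp only [Option.getD_some, Option.toList_some, sum_singleton, countDowns_cons,
        countDowns_nil, add_zero, zero_add]
      split_ifs <;> simp

def trailingDowns (w : List ℤ) : ℕ := (w.reverse.takeWhile (fun x => decide (x = -2))).length

theorem trailingDowns_append_replicate {p : List ℤ} (hp : p.getLast? ≠ some (-2)) (a : ℕ) :
    trailingDowns (p ++ replicate a (-2)) = a := by
  have hp' : p.reverse.takeWhile (fun x => decide (x = -2)) = [] := by
    cases hr : p.reverse with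
    | nil => rfl
    | cons x r =>
      have : p.getLast? = some x := by rw [← head?_reverse, hr, head?_cons]
      simp_all
  rw [trailingDowns, reverse_append, reverse_replicate,
    takeWhile_append_of_pos (by simp +contextual [mem_replicate]), hp']
  simp

theorem exists_eq_append_replicate (w : List ℤ) :
    ∃ (p : List ℤ) (r : ℕ), p.getLast? ≠ some (-2) ∧ w = p ++ replicate r (-2) := by
  refine ⟨(w.reverse.dropWhile (fun x => decide (x = -2))).reverse, trailingDowns w, ?_, ?_⟩
  · intro h
    have := head?_dropWhile_not (fun x => decide (x = -2)) w.reverse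
    rw [← getLast?_reverse, h] at this
    simp at this
  · have htake : w.reverse.takeWhile (fun x => decide (x = -2)) =
        replicate (trailingDowns w) (-2) :=
      eq_replicate_iff.mpr ⟨rfl, fun b hb => by simpa using mem_takeWhile_imp hb⟩
    conv_lhs => rw [← reverse_reverse w, ← takeWhile_append_dropWhile (l := w.reverse)
      (p := fun x => decide (x = -2))]
    rw [reverse_append, htake, reverse_replicate]

theorem append_replicate_inj {p q : List ℤ} (hp : p.getLast? ≠ some (-2))
    (hq : q.getLast? ≠ some (-2)) {a b : ℕ}
    (h : p ++ replicate a (-2) = q ++ replicate b (-2)) : p = q ∧ a = b := by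
  obtain rfl : a = b := by
    simpa [trailingDowns_append_replicate hp, trailingDowns_append_replicate hq] using
      congrArg trailingDowns h
  exact ⟨append_cancel_right h, rfl⟩

theorem countDownsBefore_append_replicate (P : ℤ → Prop) [DecidablePred P] {p : List ℤ}
    (hp : p.getLast? ≠ some (-2)) (a : ℕ) :
    countDownsBefore P (p ++ replicate a (-2))
      ((p ++ replicate a (-2)).length - trailingDowns (p ++ replicate a (-2))) =
      countDowns P 0 p := by
  simp [trailingDowns_append_replicate hp, countDownsBefore_eq_countDowns_take]

def hook (a b : ℕ) : List ℤ := replicate a (-2) ++ [1] ++ replicate b (-2) ++ [1]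

section hook

variable {a b : ℕ} {h : ℤ}

theorem count_one_hook : (hook a b).count 1 = 2 := by
  simp [hook, count_replicate]

theorem countDowns_even_hook (hh : Even h) : countDowns Even h (hook a b) = a := by
  have hP : ∀ x : ℤ, Even (x + -2) ↔ Even x := by intro x; simp [Int.even_add]
  simp [hook, countDowns_replicate _ hP, hh, Int.even_add]

theorem countDowns_odd_hook (hh : Even h) : countDowns Odd h (hook a b) = b := by
  have hP : ∀ x : ℤ, Odd (x + -2) ↔ Odd x := by intro x; simp [Int.odd_add]
  simp [hook, countDowns_replicate _ hP, hh, Int.odd_add, Int.even_add]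

theorem staysNonneg_hook (hab : 2 * (a + b) ≤ h) : StaysNonneg h (hook a b) := by
  simp only [hook, staysNonneg_append, staysNonneg_replicate, staysNonneg_cons, staysNonneg_nil,
    sum_append, sum_replicate, nsmul_eq_mul, sum_singleton]
  omega

theorem append_hook_inj {p q : List ℤ} (hp : p.getLast? ≠ some (-2))
    (hq : q.getLast? ≠ some (-2)) {c d : ℕ} (h : p ++ hook a b = q ++ hook c d) :
    p = q ∧ a = c ∧ b = d := by
  simp only [hook, ← append_assoc, append_cancel_right_eq] at h
  obtain ⟨h', rfl⟩ := append_replicate_inj (by simp) (by simp) h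
  obtain ⟨rfl, rfl⟩ := append_replicate_inj hp hq (append_cancel_right h')
  exact ⟨rfl, rfl, rfl⟩

end hook

/-- The part of a 2-Dyck path of semilength `n` before its final run of down steps, with `k`
down steps of even height and `l` of odd height. -/
structure IsStrippedPath (n k l : ℕ) (p : List ℤ) : Prop where
  steps : ∀ x ∈ p, x = 1 ∨ x = -2
  staysNonneg : StaysNonneg 0 p
  getLast?_ne : p.getLast? ≠ some (-2)
  count_one : p.count 1 = 2 * n
  countDowns_even : countDowns Even 0 p = k
  countDowns_odd : countDowns Odd 0 p = l

namespace IsStrippedPath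

variable {n k l : ℕ} {p : List ℤ}

theorem count_neg_two (hp : IsStrippedPath n k l p) : p.count (-2) = k + l := by
  rw [← countDowns_even_add_countDowns_odd 0, hp.countDowns_even, hp.countDowns_odd]

theorem sum_eq (hp : IsStrippedPath n k l p) : p.sum = 2 * n - 2 * (k + l) := by
  rw [sum_eq_count_sub hp.steps, hp.count_one, hp.count_neg_two]
  push_cast
  ring

theorem even_sum (hp : IsStrippedPath n k l p) : Even p.sum :=
  even_sum_of_even_count hp.steps (hp.count_one ▸ even_two_mul n)

theorem length_eq (hp : IsStrippedPath n k l p) : p.length = 2 * n + (k + l) := by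
  rw [length_eq_count_add hp.steps, hp.count_one, hp.count_neg_two]

theorem add_le (hp : IsStrippedPath n k l p) : k + l ≤ n := by
  have := hp.staysNonneg.add_sum_nonneg
  rw [zero_add, hp.sum_eq] at this
  omega

theorem add_lt (hn : n ≠ 0) (hp : IsStrippedPath n k l p) : k + l < n := by
  have hne : p ≠ [] := by
    rintro rfl
    exact hn (by simpa using hp.count_one.symm)
  obtain ⟨q, rfl⟩ := exists_eq_append_one hp.steps hp.getLast?_ne hne
  have hq := (staysNonneg_append.mp hp.staysNonneg).1.add_sum_nonneg
  have hsum := hp.sum_eq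
  rw [sum_append, sum_singleton] at hsum
  omega

theorem append_hook {i j a b : ℕ} (hp : IsStrippedPath n i j p) (h : i + a + (j + b) ≤ n) :
    IsStrippedPath (n + 1) (i + a) (j + b) (p ++ hook a b) where
  steps := by simpa [hook, or_imp, forall_and] using hp.steps
  staysNonneg :=
    staysNonneg_append.mpr ⟨hp.staysNonneg, staysNonneg_hook (by rw [hp.sum_eq]; omega)⟩
  getLast?_ne := by simp [hook, ← append_assoc]
  count_one := by rw [count_append, count_one_hook, hp.count_one, mul_add_one]
  countDowns_even := by
    rw [countDowns_append, zero_add, countDowns_even_hook hp.even_sum, hp.countDowns_even]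
  countDowns_odd := by
    rw [countDowns_append, zero_add, countDowns_odd_hook hp.even_sum, hp.countDowns_odd]

theorem exists_eq_append_hook (hp : IsStrippedPath (n + 1) k l p) :
    ∃ a ≤ k, ∃ b ≤ l, ∃ q, IsStrippedPath n (k - a) (l - b) q ∧ p = q ++ hook a b := by
  obtain ⟨hs, hnn, hlast, h1, hk, hl⟩ := hp
  have hne : p ≠ [] := by rintro rfl; simp at h1
  obtain ⟨p₁, rfl⟩ := exists_eq_append_one hs hlast hne
  obtain ⟨p₂, b, hp₂, rfl⟩ := exists_eq_append_replicate p₁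
  have hs₂ : ∀ x ∈ p₂, x = 1 ∨ x = -2 := fun x hx => hs x (by simp [hx])
  have hne₂ : p₂ ≠ [] := by
    rintro rfl
    have : 1 = 2 * (n + 1) := by simpa [count_replicate] using h1
    omega
  obtain ⟨p₃, rfl⟩ := exists_eq_append_one hs₂ hp₂ hne₂
  obtain ⟨q, a, hq, rfl⟩ := exists_eq_append_replicate p₃
  have hpq : q ++ replicate a (-2) ++ [1] ++ replicate b (-2) ++ [1] = q ++ hook a b := by
    simp [hook]
  rw [hpq] at hs hnn h1 hk hl ⊢
  rw [count_append, count_one_hook] at h1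
  have hqs : ∀ x ∈ q, x = 1 ∨ x = -2 := fun x hx => hs x (by simp [hx])
  have heven : Even q.sum := even_sum_of_even_count hqs ⟨n, by omega⟩
  rw [countDowns_append, zero_add, countDowns_even_hook heven] at hk
  rw [countDowns_append, zero_add, countDowns_odd_hook heven] at hl
  exact ⟨a, by omega, b, by omega, q,
    ⟨hqs, (staysNonneg_append.mp hnn).1, hq, by omega, by omega, by omega⟩, rfl⟩

end IsStrippedPath

def strippedPaths (n k l : ℕ) : Set (List ℤ) := {p | IsStrippedPath n k l p}

@[simp]
theorem mem_strippedPaths {n k l : ℕ} {p : List ℤ} :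
    p ∈ strippedPaths n k l ↔ IsStrippedPath n k l p :=
  Iff.rfl

theorem finite_setOf_length_eq_forall_mem {α : Type*} {s : Set α} (hs : s.Finite) (m : ℕ) :
    {w : List α | w.length = m ∧ ∀ x ∈ w, x ∈ s}.Finite := by
  have := hs.to_subtype
  refine ((finite_length_eq s m).image (map Subtype.val)).subset ?_
  rintro w ⟨rfl, hw⟩
  lift w to List s using hw
  exact ⟨w, by simp, rfl⟩

theorem strippedPaths_finite (n k l : ℕ) : (strippedPaths n k l).Finite :=
  (finite_setOf_length_eq_forall_mem (s := {1, -2}) (by simp) (2 * n + (k + l))).subset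
    fun _ hp => ⟨hp.length_eq, by simpa using hp.steps⟩

theorem strippedPaths_zero : strippedPaths 0 0 0 = {[]} := by
  ext p
  refine ⟨fun hp => ?_, fun hp => ?_⟩
  · by_contra hne
    obtain ⟨q, rfl⟩ := exists_eq_append_one hp.steps hp.getLast?_ne hne
    simpa using hp.count_one
  · rw [Set.mem_singleton_iff.mp hp]
    exact ⟨by simp, by simp, by simp, rfl, rfl, rfl⟩

theorem strippedPaths_eq_empty {n k l : ℕ} (hn : n ≠ 0) (h : n ≤ k + l) :
    strippedPaths n k l = ∅ :=
  Set.eq_empty_of_forall_notMem fun _ hp => (IsStrippedPath.add_lt hn hp).not_ge h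

theorem strippedPaths_succ {n k l : ℕ} (h : k + l ≤ n) :
    strippedPaths (n + 1) k l =
      ⋃ ij ∈ ((Finset.range (k + 1) ×ˢ Finset.range (l + 1) : Finset (ℕ × ℕ)) : Set (ℕ × ℕ)),
      (· ++ hook (k - ij.1) (l - ij.2)) '' strippedPaths n ij.1 ij.2 := by
  ext p
  simp only [Set.mem_iUnion, Set.mem_image, Finset.coe_product, Set.mem_prod, Finset.mem_coe,
    Finset.mem_range, Prod.exists, exists_prop, mem_strippedPaths]
  constructor
  · intro hp
    obtain ⟨a, ha, b, hb, q, hq, rfl⟩ := IsStrippedPath.exists_eq_append_hook hp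
    exact ⟨k - a, l - b, ⟨by omega, by omega⟩, q, hq,
      by rw [Nat.sub_sub_self ha, Nat.sub_sub_self hb]⟩
  · rintro ⟨i, j, ⟨hi, hj⟩, q, hq, rfl⟩
    simpa [Nat.add_sub_cancel' (by omega : i ≤ k), Nat.add_sub_cancel' (by omega : j ≤ l)] using
      IsStrippedPath.append_hook hq (a := k - i) (b := l - j) (by omega)

theorem ncard_strippedPaths_succ {n k l : ℕ} (h : k + l ≤ n) :
    (strippedPaths (n + 1) k l).ncard =
      ∑ i ∈ Finset.range (k + 1), ∑ j ∈ Finset.range (l + 1), (strippedPaths n i j).ncard := by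
  rw [strippedPaths_succ h, Set.Finite.ncard_biUnion (Finset.finite_toSet _)
    (fun ij _ => (strippedPaths_finite n _ _).image _), finsum_mem_coe_finset,
    Finset.sum_product]
  · refine Finset.sum_congr rfl fun i _ => Finset.sum_congr rfl fun j _ => ?_
    exact Set.ncard_image_of_injective _ (append_left_injective _)
  · rintro ⟨i₁, j₁⟩ h₁ ⟨i₂, j₂⟩ h₂ hne
    simp only [Finset.coe_product, Set.mem_prod, Finset.mem_coe, Finset.mem_range] at h₁ h₂
    refine Set.disjoint_left.mpr ?_
    rintro _ ⟨q₁, hq₁, rfl⟩ ⟨q₂, hq₂, heq⟩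
    obtain ⟨-, ha, hb⟩ := append_hook_inj hq₂.getLast?_ne hq₁.getLast?_ne heq
    exact hne (Prod.ext (by omega) (by omega))

def twoDyckPathsWith (n k l : ℕ) : Set (List ℤ) :=
  {w | w.length = 3 * n ∧ (∀ x ∈ w, x = 1 ∨ x = -2) ∧ (∀ j : ℕ, 0 ≤ (w.take j).sum) ∧
    w.sum = 0 ∧ countDownsBefore Even w (w.length - trailingDowns w) = k ∧
    countDownsBefore Odd w (w.length - trailingDowns w) = l}

theorem twoDyckPathsWith_eq_image (n k l : ℕ) :
    twoDyckPathsWith n k l = (· ++ replicate (n - (k + l)) (-2)) '' strippedPaths n k l := by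
  ext w
  constructor
  · rintro ⟨hlen, hs, hnn, hsum, hk, hl⟩
    obtain ⟨p, r, hp, rfl⟩ := exists_eq_append_replicate w
    rw [countDownsBefore_append_replicate _ hp] at hk hl
    rw [← staysNonneg_zero_iff, staysNonneg_append] at hnn
    have hps : ∀ x ∈ p, x = 1 ∨ x = -2 := fun x hx => hs x (mem_append_left _ hx)
    have h2 : p.count (-2) = k + l := by rw [← countDowns_even_add_countDowns_odd 0, hk, hl]
    have hlen' := length_eq_count_add hps
    have hsum' := sum_eq_count_sub hps
    rw [length_append, length_replicate] at hlen
    rw [sum_append, sum_replicate, nsmul_eq_mul] at hsum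
    exact ⟨p, ⟨hps, hnn.1, hp, by omega, hk, hl⟩, by rw [show n - (k + l) = r by omega]⟩
  · rintro ⟨p, hp, rfl⟩
    have hle := hp.add_le
    have hsum := hp.sum_eq
    have hlen := hp.length_eq
    refine ⟨?_, ?_, ?_, ?_, ?_, ?_⟩
    · rw [length_append, length_replicate]; omega
    · simpa [or_imp, forall_and] using hp.steps
    · rw [← staysNonneg_zero_iff, staysNonneg_append, staysNonneg_replicate]
      exact ⟨hp.staysNonneg, by omega⟩
    · rw [sum_append, sum_replicate, nsmul_eq_mul]; omega
    · rw [countDownsBefore_append_replicate _ hp.getLast?_ne, hp.countDowns_even]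
    · rw [countDownsBefore_append_replicate _ hp.getLast?_ne, hp.countDowns_odd]

end TwoDyck

open TwoDyck in
/-- For `n ≥ 1` and `k + l < n`, `B₃ n k l` counts the 2-Dyck paths of
length `3n` (sequences of steps `+1` or `-2` with nonnegative partial sums and total
sum `0`) having exactly `k` down steps of even height and exactly `l` down steps of odd
height, where the height of a down step is the partial sum up to and including it, and
the down steps of the maximal final run of consecutive down steps are not counted. -/
theorem fuss_catalan_tetrahedron_counts_two_dyck_paths
    (B₃ : ℕ → ℕ → ℕ → ℕ)
    (hB1 : B₃ 1 0 0 = 1)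
    (hrec : ∀ n k l, 1 < n → k + l < n →
      B₃ n k l = ∑ i ∈ Finset.range (k + 1), ∑ j ∈ Finset.range (l + 1), B₃ (n - 1) i j)
    (hzero : ∀ n k l, n ≤ k + l → B₃ n k l = 0) :
    ∀ n k l : ℕ, 1 ≤ n → k + l < n →
      B₃ n k l = Set.ncard {w : List ℤ |
        w.length = 3 * n ∧
        (∀ x ∈ w, x = 1 ∨ x = -2) ∧
        (∀ j : ℕ, 0 ≤ (w.take j).sum) ∧
        w.sum = 0 ∧
        ((Finset.range (w.length - (w.reverse.takeWhile (fun x => decide (x = -2))).length)).filter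
          (fun j => w.getD j 0 = -2 ∧ Even ((w.take (j + 1)).sum))).card = k ∧
        ((Finset.range (w.length - (w.reverse.takeWhile (fun x => decide (x = -2))).length)).filter
          (fun j => w.getD j 0 = -2 ∧ Odd ((w.take (j + 1)).sum))).card = l} := by
  have hstripped : ∀ n, 1 ≤ n → ∀ k l, B₃ n k l = (strippedPaths n k l).ncard := by
    intro n hn
    induction n, hn using Nat.le_induction with
    | base =>
      intro k l
      rcases Nat.eq_zero_or_pos (k + l) with h | h
      · obtain ⟨rfl, rfl⟩ : k = 0 ∧ l = 0 := by omega
        simp [hB1, ncard_strippedPaths_succ, strippedPaths_zero]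
      · rw [hzero 1 k l h, strippedPaths_eq_empty one_ne_zero h, Set.ncard_empty]
    | succ n hn ih =>
      intro k l
      rcases Nat.lt_or_ge (k + l) (n + 1) with h | h
      · rw [hrec _ _ _ (by omega) h, ncard_strippedPaths_succ (by omega)]
        simp [ih]
      · rw [hzero _ _ _ h, strippedPaths_eq_empty (by omega) h, Set.ncard_empty]
  intro n k l hn _
  change B₃ n k l = (twoDyckPathsWith n k l).ncard
  rw [twoDyckPathsWith_eq_image, Set.ncard_image_of_injective _ (List.append_left_injective _),
    hstripped n hn]
end

section
/- Let B₃ : ℕ → ℕ → ℕ → ℕ satisfy: B₃(1,0,0)=1; for all n>1 and k+l<n, B₃(n,k,l)=∑_{i=0}^{k}∑_{j=0}^{l} B₃(n−1,i,j); and B₃(n,k,l)=0 whenever k+l≥n. Then for all n≥1 and k,l≥0 with k+l<n, B₃(n,k,l) = binom(n+k,k)·binom(n+l−1,l)·(n−k−l)/(n+k); equivalently (n+k)·B₃(n,k,l) = binom(n+k,k)·binom(n+l−1,l)·(n−k−l). -/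
/-!
Writing `n = m + 1`, the claim is equivalent to
`(m + 1) * B₃ (m + 1) k l = C(m + k, k) * C(m + l, l) * (m + 1 - k - l)` for `k + l ≤ m + 1`,
proved by induction on `m` (on the boundary `k + l = m + 1` both sides vanish).
In the inductive step the double sum of the recursion factors: the weight `m + 1 - i - j` is
affine in `i` and `j`, and both `∑ i ≤ k, C(m + i, i)` (hockey stick) and
`∑ i ≤ k, i * C(m + i, i)` are multiples of `C(m + 1 + k, k)`.
-/

open Finset

theorem Nat.sum_range_add_choose_right (m k : ℕ) :
    ∑ i ∈ range (k + 1), (m + i).choose i = (m + 1 + k).choose k := by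
  induction k with
  | zero => simp
  | succ k ih =>
    rw [sum_range_succ, ih, show m + 1 + (k + 1) = (m + 1 + k) + 1 by omega, Nat.choose_succ_succ,
      show m + (k + 1) = m + 1 + k by omega]

theorem Nat.succ_mul_sum_range_mul_add_choose_right (m k : ℕ) :
    (m + 2) * ∑ i ∈ range (k + 1), i * (m + i).choose i = (m + 1) * k * (m + 1 + k).choose k := by
  induction k with
  | zero => simp
  | succ k ih =>
    have hpascal : (m + 1 + (k + 1)).choose (k + 1)
        = (m + 1 + k).choose k + (m + 1 + k).choose (k + 1) := by
      rw [show m + 1 + (k + 1) = (m + 1 + k) + 1 by omega, Nat.choose_succ_succ]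
    have habsorb : (m + 1 + k).choose (k + 1) * (k + 1) = (m + 1 + k).choose k * (m + 1) := by
      rw [Nat.choose_succ_right_eq]; congr 1; omega
    rw [sum_range_succ, mul_add, ih, hpascal, show m + (k + 1) = m + 1 + k by omega]
    zify at habsorb ⊢
    linear_combination habsorb

theorem Finset.sum_sum_mul_mul_sub_sub {R : Type*} [CommRing R] (s t : Finset ℕ) (f g : ℕ → R)
    (c : R) :
    ∑ i ∈ s, ∑ j ∈ t, f i * g j * (c - i - j)
      = c * (∑ i ∈ s, f i) * (∑ j ∈ t, g j) - (∑ i ∈ s, i * f i) * (∑ j ∈ t, g j)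
        - (∑ i ∈ s, f i) * (∑ j ∈ t, j * g j) := by
  rw [mul_sum s f c]
  simp only [sum_mul_sum, ← sum_sub_distrib]
  refine sum_congr rfl fun i _ => sum_congr rfl fun j _ => ?_
  ring

section FussCatalanTetrahedron

variable {B₃ : ℕ → ℕ → ℕ → ℕ}

theorem succ_mul_eq_choose_mul_choose_of_add_eq (hzero : ∀ n k l, n ≤ k + l → B₃ n k l = 0)
    {m k l : ℕ} (h : k + l = m + 1) :
    ((m : ℤ) + 1) * B₃ (m + 1) k l
      = (m + k).choose k * (m + l).choose l * ((m : ℤ) + 1 - k - l) := by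
  rw [hzero _ _ _ h.ge, show (m : ℤ) + 1 - k - l = 0 by omega]
  simp

theorem succ_mul_eq_choose_mul_choose_of_le (hB1 : B₃ 1 0 0 = 1)
    (hrec : ∀ n k l, 1 < n → k + l < n →
      B₃ n k l = ∑ i ∈ range (k + 1), ∑ j ∈ range (l + 1), B₃ (n - 1) i j)
    (hzero : ∀ n k l, n ≤ k + l → B₃ n k l = 0) (m : ℕ) :
    ∀ k l, k + l ≤ m + 1 →
      ((m : ℤ) + 1) * B₃ (m + 1) k l
        = (m + k).choose k * (m + l).choose l * ((m : ℤ) + 1 - k - l) := by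
  induction m with
  | zero =>
    intro k l hkl
    obtain hlt | hedge := hkl.lt_or_eq
    · obtain ⟨rfl, rfl⟩ : k = 0 ∧ l = 0 := by omega
      simp [hB1]
    · exact succ_mul_eq_choose_mul_choose_of_add_eq hzero hedge
  | succ m ih =>
    intro k l hkl
    obtain hlt | hedge := hkl.lt_or_eq
    swap
    · exact succ_mul_eq_choose_mul_choose_of_add_eq hzero hedge
    have hsum : ((m : ℤ) + 1) * ∑ i ∈ range (k + 1), ∑ j ∈ range (l + 1), (B₃ (m + 1) i j : ℤ)
        = ∑ i ∈ range (k + 1), ∑ j ∈ range (l + 1),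
            ((m + i).choose i : ℤ) * (m + j).choose j * ((m : ℤ) + 1 - i - j) := by
      simp only [mul_sum]
      refine sum_congr rfl fun i hi => sum_congr rfl fun j hj => ih i j ?_
      simp only [mem_range] at hi hj
      omega
    have hk : ∑ i ∈ range (k + 1), ((m + i).choose i : ℤ) = (m + 1 + k).choose k := by
      exact_mod_cast Nat.sum_range_add_choose_right m k
    have hl : ∑ j ∈ range (l + 1), ((m + j).choose j : ℤ) = (m + 1 + l).choose l := by
      exact_mod_cast Nat.sum_range_add_choose_right m l
    have hk' : ((m : ℤ) + 2) * ∑ i ∈ range (k + 1), (i : ℤ) * (m + i).choose i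
        = (m + 1) * k * (m + 1 + k).choose k := by
      exact_mod_cast Nat.succ_mul_sum_range_mul_add_choose_right m k
    have hl' : ((m : ℤ) + 2) * ∑ j ∈ range (l + 1), (j : ℤ) * (m + j).choose j
        = (m + 1) * l * (m + 1 + l).choose l := by
      exact_mod_cast Nat.succ_mul_sum_range_mul_add_choose_right m l
    rw [sum_sum_mul_mul_sub_sub, hk, hl] at hsum
    rw [hrec (m + 1 + 1) k l (by omega) hlt]
    apply mul_left_cancel₀ (show (m : ℤ) + 1 ≠ 0 by positivity)
    push_cast
    linear_combination ((m : ℤ) + 2) * hsum - ((m + 1 + l).choose l : ℤ) * hk'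
      - ((m + 1 + k).choose k : ℤ) * hl'

end FussCatalanTetrahedron

/-- Explicit formula for `B₃`:
for `n ≥ 1` and `k + l < n`,
`(n + k) * B₃ n k l = binom(n+k, k) * binom(n+l-1, l) * (n - k - l)`. -/
theorem fuss_catalan_tetrahedron_closed_formula
    (B₃ : ℕ → ℕ → ℕ → ℕ)
    (hB1 : B₃ 1 0 0 = 1)
    (hrec : ∀ n k l, 1 < n → k + l < n →
      B₃ n k l = ∑ i ∈ Finset.range (k + 1), ∑ j ∈ Finset.range (l + 1), B₃ (n - 1) i j)
    (hzero : ∀ n k l, n ≤ k + l → B₃ n k l = 0) :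
    ∀ n k l : ℕ, 1 ≤ n → k + l < n →
      (n + k) * B₃ n k l
        = Nat.choose (n + k) k * Nat.choose (n + l - 1) l * (n - k - l) := by
  rintro n k l hn hkl
  obtain ⟨m, rfl⟩ : ∃ m, n = m + 1 := ⟨n - 1, by omega⟩
  have hB := succ_mul_eq_choose_mul_choose_of_le hB1 hrec hzero m k l hkl.le
  have habsorb := Nat.choose_mul_succ_eq (m + k) k
  rw [show m + k + 1 - k = m + 1 by omega] at habsorb
  rw [show m + 1 + l - 1 = m + l by omega, show m + 1 + k = m + k + 1 by omega]
  apply mul_left_cancel₀ (show m + 1 ≠ 0 by omega)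
  zify [show k ≤ m + 1 by omega, show l ≤ m + 1 - k by omega] at habsorb hB ⊢
  linear_combination ((m : ℤ) + k + 1) * hB + ((m + l).choose l * ((m : ℤ) + 1 - k - l)) * habsorb
end

section
/- In the ring of formal power series in three variables t, x, y over ℤ, let F = 1 + ∑_{n≥1, k+l<n} B₃(n,k,l)·t^n·x^k·y^l and G = 1 + ∑_{n≥1, k+l<n} B₃(n,k,l)·t^n·x^{n−l}·y^l, and let G~ denote G with the variables x and y exchanged. Then F = 1 + t·G·G~·F. -/
/-!
Write `D_r` for the part of `F` on the diagonal `n = k + l + r` (with `D_0 = 1`) and `D = D_1`.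
On a diagonal every `B₃(n, k, l)` is a two-dimensional prefix sum of the layer `n - 1`, so
inclusion–exclusion turns the recursion into the linear recurrence
`D_{r+1} = t D_r + (x + y) D_{r+2} - x y D_{r+3}`. As `t`, `x + y` and `x y` have no constant
term, a solution of this recurrence is determined by its first term; comparing `r ↦ D_{r+s}`
with `r ↦ D_s D_r` gives `D_r = D^r`. Hence `F = 1/(1 - D)`, `G = 1/(1 - x D)`,
`G~ = 1/(1 - y D)`, and the recurrence at `r = 0` reads `t = D (1 - x D) (1 - y D)`, so that
`t G G~ F = D F = F - 1`.
-/

open MvPowerSeries Finset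

section Recurrence

variable {σ R : Type*} [CommRing R] {a b c : MvPowerSeries σ R}

def SatisfiesRecurrence (a b c : MvPowerSeries σ R) (E : ℕ → MvPowerSeries σ R) : Prop :=
  ∀ r, E (r + 1) = a * E r + b * E (r + 2) + c * E (r + 3)

namespace SatisfiesRecurrence

theorem eq_zero (ha : constantCoeff a = 0) (hb : constantCoeff b = 0)
    (hc : constantCoeff c = 0) {Δ : ℕ → MvPowerSeries σ R} (hΔ : SatisfiesRecurrence a b c Δ)
    (h0 : Δ 0 = 0) (r : ℕ) : Δ r = 0 := by
  have hle : ∀ N : ℕ, ∀ r, (N : ℕ∞) ≤ (Δ r).order := by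
    intro N
    induction N with
    | zero => simp
    | succ N ih =>
      have hmul : ∀ f : MvPowerSeries σ R, constantCoeff f = 0 → ∀ s,
          ((N + 1 : ℕ) : ℕ∞) ≤ (f * Δ s).order := fun f hf s =>
        calc ((N + 1 : ℕ) : ℕ∞) = 1 + N := by push_cast; ring
          _ ≤ f.order + (Δ s).order :=
            add_le_add (one_le_order_iff_constCoeff_eq_zero.mpr hf) (ih s)
          _ ≤ (f * Δ s).order := le_order_mul
      rintro (_ | r)
      · simp [h0]
      · rw [hΔ r]
        exact le_trans (le_min (le_min (hmul a ha r) (hmul b hb _)) (hmul c hc _))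
          (le_trans (min_le_min_right _ min_order_le_add) min_order_le_add)
  exact order_eq_top_iff.mp (top_le_iff.mp (ENat.forall_natCast_le_iff_le.mp fun N _ => hle N r))

theorem sub {E E' : ℕ → MvPowerSeries σ R} (hE : SatisfiesRecurrence a b c E)
    (hE' : SatisfiesRecurrence a b c E') : SatisfiesRecurrence a b c (fun r => E r - E' r) :=
  fun r => by simp only [hE r, hE' r]; ring

theorem const_mul {E : ℕ → MvPowerSeries σ R} (hE : SatisfiesRecurrence a b c E)
    (φ : MvPowerSeries σ R) : SatisfiesRecurrence a b c (fun r => φ * E r) :=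
  fun r => by simp only [hE r]; ring

theorem shift {E : ℕ → MvPowerSeries σ R} (hE : SatisfiesRecurrence a b c E) (s : ℕ) :
    SatisfiesRecurrence a b c (fun r => E (r + s)) :=
  fun r => by simpa only [add_right_comm _ s] using hE (r + s)

theorem eq_pow (ha : constantCoeff a = 0) (hb : constantCoeff b = 0)
    (hc : constantCoeff c = 0) {E : ℕ → MvPowerSeries σ R} (hE : SatisfiesRecurrence a b c E)
    (h0 : E 0 = 1) (r : ℕ) : E r = E 1 ^ r := by
  have hadd : ∀ s r, E (r + s) = E s * E r := fun s r =>
    sub_eq_zero.mp <| ((hE.shift s).sub (hE.const_mul (E s))).eq_zero ha hb hc (by simp [h0]) r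
  induction r with
  | zero => simp [h0]
  | succ r ih => rw [hadd 1 r, ih, pow_succ']

end SatisfiesRecurrence

end Recurrence

namespace MvPowerSeries

variable {σ R : Type*}

theorem coeff_X_pow_mul' [CommSemiring R] [DecidableEq σ] (i : σ) (r : ℕ)
    (φ : MvPowerSeries σ R) (d : σ →₀ ℕ) :
    coeff d (X i ^ r * φ) = if r ≤ d i then coeff (d - Finsupp.single i r) φ else 0 := by
  rw [X_pow_eq, coeff_monomial_mul, one_mul]
  simp only [Finsupp.single_le_iff]

theorem coeff_X_mul' [CommSemiring R] [DecidableEq σ] (i : σ) (φ : MvPowerSeries σ R)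
    (d : σ →₀ ℕ) :
    coeff d (X i * φ) = if 1 ≤ d i then coeff (d - Finsupp.single i 1) φ else 0 := by
  rw [← coeff_X_pow_mul', pow_one]

theorem coeff_renameEquiv [CommSemiring R] (e : σ ≃ σ) (p : MvPowerSeries σ R)
    (d : σ →₀ ℕ) : coeff d (renameEquiv R e p) = coeff (d.equivMapDomain e.symm) p := by
  have : d = Finsupp.embDomain e.toEmbedding (d.equivMapDomain e.symm) := by
    ext i; simp [Finsupp.embDomain_eq_mapDomain, Finsupp.equivMapDomain_eq_mapDomain]
  conv_lhs => rw [this]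
  exact coeff_embDomain_rename _ _ _

theorem mul_one_sub_eq_one_of_coeff_eq_sum_pow [CommRing R] {S Q : MvPowerSeries σ R}
    (hQ : constantCoeff Q = 0)
    (hS : ∀ d, coeff d S = ∑ r ∈ range (d.degree + 1), coeff d (Q ^ r)) :
    S * (1 - Q) = 1 := by
  classical
  have hpow : ∀ d r, d.degree < r → coeff d (Q ^ r) = 0 := fun d r h =>
    coeff_of_lt_order <| (Nat.cast_lt.mpr h).trans_le (le_order_pow_of_constantCoeff_eq_zero r hQ)
  ext d
  set P := ∑ r ∈ range (d.degree + 1), Q ^ r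
  have htrunc : trunc' R d S = trunc' R d P := by
    ext p
    simp only [coeff_trunc']
    split_ifs with hp
    · rw [hS, map_sum]
      refine sum_subset (range_subset_range.mpr (by grw [Finsupp.degree_mono hp])) ?_
      intro r _ hr
      exact hpow p r (by simpa using hr)
    · rfl
  rw [← coeff_trunc'_mul_trunc'_eq_coeff_mul d S _ le_rfl, htrunc,
    coeff_trunc'_mul_trunc'_eq_coeff_mul d P _ le_rfl, geom_sum_mul_neg, map_sub,
    hpow d _ (Nat.lt_succ_self _), sub_zero]

end MvPowerSeries

theorem Finset.sum_range_ite_le {M : Type*} [AddCommMonoid M] {m N : ℕ} (h : m < N)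
    (f : ℕ → M) : ∑ r ∈ range N, (if r ≤ m then f r else 0) = ∑ r ∈ range (m + 1), f r := by
  rw [← sum_filter]; congr 1; ext r; simp; omega

theorem Finsupp.degree_fin_three (d : Fin 3 →₀ ℕ) : d.degree = d 0 + d 1 + d 2 := by
  rw [degree_eq_sum, Fin.sum_univ_three]

theorem Finsupp.eq_zero_iff_fin_three (d : Fin 3 →₀ ℕ) :
    d = 0 ↔ d 0 = 0 ∧ d 1 = 0 ∧ d 2 = 0 := by
  simp [Finsupp.ext_iff, Fin.forall_fin_succ]

structure IsB₃ (B : ℕ → ℕ → ℕ → ℕ) : Prop where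
  base : B 1 0 0 = 1
  eq_sum : ∀ n k l, 1 < n → k + l < n →
    B n k l = ∑ i ∈ range (k + 1), ∑ j ∈ range (l + 1), B (n - 1) i j
  eq_zero_of_le : ∀ n k l, n ≤ k + l → B n k l = 0

namespace IsB₃

/-- `B` with the value `1` at `n = 0`; the recursion then holds from `n = 1` on. -/
def augment (B : ℕ → ℕ → ℕ → ℕ) (n k l : ℕ) : ℤ := if n = 0 then 1 else B n k l

noncomputable def diag (B : ℕ → ℕ → ℕ → ℕ) (r : ℕ) : MvPowerSeries (Fin 3) ℤ :=
  fun d => if d 0 = d 1 + d 2 + r then augment B (d 0) (d 1) (d 2) else 0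

variable {B : ℕ → ℕ → ℕ → ℕ}

@[simp] theorem augment_zero (k l : ℕ) : augment B 0 k l = 1 := if_pos rfl

theorem augment_eq_sum (hB : IsB₃ B) {n k l : ℕ} (hkl : k + l < n + 1) :
    augment B (n + 1) k l = ∑ i ∈ range (k + 1), ∑ j ∈ range (l + 1), augment B n i j := by
  rcases n with _ | n
  · obtain ⟨rfl, rfl⟩ : k = 0 ∧ l = 0 := by omega
    simp [augment, hB.base]
  · simp only [augment, if_neg (Nat.succ_ne_zero _), hB.eq_sum (n + 2) k l (by omega) hkl]
    push_cast; rfl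

theorem augment_eq_zero (hB : IsB₃ B) {n k l : ℕ} (hn : n ≠ 0) (h : n ≤ k + l) :
    augment B n k l = 0 := by
  simp [augment, hn, hB.eq_zero_of_le n k l h]

theorem augment_comm (hB : IsB₃ B) (n k l : ℕ) : augment B n k l = augment B n l k := by
  induction n generalizing k l with
  | zero => simp
  | succ n ih =>
    by_cases h : k + l < n + 1
    · rw [hB.augment_eq_sum h, hB.augment_eq_sum (by omega), sum_comm]
      simp only [ih]
    · rw [hB.augment_eq_zero (by omega) (by omega), hB.augment_eq_zero (by omega) (by omega)]

theorem coeff_diag (r : ℕ) (d : Fin 3 →₀ ℕ) :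
    coeff d (diag B r) = if d 0 = d 1 + d 2 + r then augment B (d 0) (d 1) (d 2) else 0 := rfl

theorem diag_zero (hB : IsB₃ B) : diag B 0 = 1 := by
  ext d
  rw [coeff_diag, coeff_one]
  by_cases hd : d = 0
  · subst hd; simp
  · rw [if_neg hd]
    rw [Finsupp.eq_zero_iff_fin_three] at hd
    split_ifs with h
    · exact hB.augment_eq_zero (by omega) h.le
    · rfl

theorem diag_satisfiesRecurrence (hB : IsB₃ B) :
    SatisfiesRecurrence (X 0) (X 1 + X 2) (-(X 1 * X 2)) (diag B) := by
  intro r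
  suffices diag B (r + 1) + X 1 * (X 2 * diag B (r + 3)) =
      X 0 * diag B r + X 1 * diag B (r + 2) + X 2 * diag B (r + 2) by
    linear_combination this
  ext d
  simp only [map_add, coeff_X_mul', coeff_diag, Finsupp.tsub_apply, Finsupp.single_apply,
    Fin.isValue, Fin.reduceEq, if_true, if_false, tsub_zero]
  generalize d 0 = n, d 1 = k, d 2 = l
  rcases n with _ | n
  · simp
  -- off the diagonal `n + 1 = k + l + r + 1` every term vanishes; on it, each term is a
  -- prefix sum of `augment B n` and the identity is inclusion–exclusion
  rcases k with _ | k <;> rcases l with _ | l <;> simp <;> split_ifs <;> (try omega) <;>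
    simp (disch := omega) only [hB.augment_eq_sum, sum_range_succ, sum_add_distrib,
      sum_range_zero, zero_add] <;> ring

theorem diag_eq_pow (hB : IsB₃ B) (r : ℕ) : diag B r = diag B 1 ^ r :=
  hB.diag_satisfiesRecurrence.eq_pow (by simp) (by simp) (by simp) hB.diag_zero r

theorem X_zero_eq (hB : IsB₃ B) :
    X 0 = diag B 1 * (1 - X 1 * diag B 1) * (1 - X 2 * diag B 1) := by
  have h := hB.diag_satisfiesRecurrence 0
  rw [hB.diag_zero, hB.diag_eq_pow 2, hB.diag_eq_pow 3] at h
  linear_combination -h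

theorem constantCoeff_diag_one : constantCoeff (diag B 1) = 0 := by
  rw [← coeff_zero_eq_constantCoeff_apply, coeff_diag]
  simp

theorem sum_coeff_diag (d : Fin 3 →₀ ℕ) :
    ∑ r ∈ range (d.degree + 1), coeff d (diag B r) =
      if d 1 + d 2 ≤ d 0 then augment B (d 0) (d 1) (d 2) else 0 := by
  simp only [coeff_diag]
  split_ifs with h
  · rw [sum_eq_single_of_mem (d 0 - (d 1 + d 2))
      (by rw [mem_range, Finsupp.degree_fin_three]; omega) (fun r _ hr => if_neg (by omega)),
      if_pos (by omega)]
  · exact sum_eq_zero fun r _ => if_neg (by omega)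

theorem sum_coeff_pow_X_one_mul_diag (hB : IsB₃ B) (d : Fin 3 →₀ ℕ) :
    ∑ r ∈ range (d.degree + 1), coeff d ((X 1 * diag B 1) ^ r) =
      if d 0 = d 1 + d 2 then ∑ k ∈ range (d 1 + 1), augment B (d 0) k (d 2) else 0 := by
  have hterm : ∀ r, coeff d ((X 1 * diag B 1) ^ r) =
      if r ≤ d 1 then (if d 0 = d 1 + d 2 then augment B (d 0) (d 1 - r) (d 2) else 0)
      else 0 := by
    intro r
    rw [mul_pow, ← hB.diag_eq_pow, coeff_X_pow_mul']
    split_ifs <;> simp [coeff_diag, Finsupp.tsub_apply] <;> omega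
  simp only [hterm]
  rw [sum_range_ite_le (by rw [Finsupp.degree_fin_three]; omega)]
  split_ifs
  · exact sum_range_reflect (fun k => augment B (d 0) k (d 2)) (d 1 + 1)
  · simp

theorem mul_one_sub_diag_eq_one (hB : IsB₃ B) {F : MvPowerSeries (Fin 3) ℤ}
    (hF : ∀ d : Fin 3 →₀ ℕ, coeff d F =
      if d = 0 then 1 else if d 1 + d 2 < d 0 then (B (d 0) (d 1) (d 2) : ℤ) else 0) :
    F * (1 - diag B 1) = 1 := by
  refine mul_one_sub_eq_one_of_coeff_eq_sum_pow constantCoeff_diag_one fun d => ?_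
  simp only [← hB.diag_eq_pow, sum_coeff_diag, hF]
  by_cases hd : d = 0
  · subst hd; simp
  rw [if_neg hd]
  rw [Finsupp.eq_zero_iff_fin_three] at hd
  split_ifs with h h'
  · rw [augment, if_neg (by omega)]
  · omega
  · exact (hB.augment_eq_zero (by omega) (by omega)).symm
  · rfl

theorem mul_one_sub_X_one_mul_diag_eq_one (hB : IsB₃ B) {G : MvPowerSeries (Fin 3) ℤ}
    (hG : ∀ d : Fin 3 →₀ ℕ, coeff d G =
      if d = 0 then 1 else
        if 1 ≤ d 1 ∧ d 0 = d 1 + d 2 then ∑ k ∈ range (d 1), (B (d 0) k (d 2) : ℤ) else 0) :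
    G * (1 - X 1 * diag B 1) = 1 := by
  refine mul_one_sub_eq_one_of_coeff_eq_sum_pow (by simp [constantCoeff_diag_one])
    fun d => ?_
  rw [hG, hB.sum_coeff_pow_X_one_mul_diag]
  by_cases hd : d = 0
  · subst hd; simp
  rw [if_neg hd]
  rw [Finsupp.eq_zero_iff_fin_three] at hd
  split_ifs with h h'
  · rw [sum_range_succ, hB.augment_eq_zero (by omega) (by omega), add_zero]
    exact sum_congr rfl fun k _ => by simp [augment, show d 0 ≠ 0 by omega]
  · omega
  · rw [show d 1 = 0 by omega, zero_add, sum_range_one,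
      hB.augment_eq_zero (by omega) (by omega)]
  · rfl

theorem mul_one_sub_X_two_mul_diag_eq_one (hB : IsB₃ B) {G G' : MvPowerSeries (Fin 3) ℤ}
    (hG : ∀ d : Fin 3 →₀ ℕ, coeff d G =
      if d = 0 then 1 else
        if 1 ≤ d 1 ∧ d 0 = d 1 + d 2 then ∑ k ∈ range (d 1), (B (d 0) k (d 2) : ℤ) else 0)
    (hG' : ∀ d : Fin 3 →₀ ℕ, coeff d G' =
      if d = 0 then 1 else
        if 1 ≤ d 2 ∧ d 0 = d 1 + d 2 then ∑ k ∈ range (d 2), (B (d 0) k (d 1) : ℤ) else 0) :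
    G' * (1 - X 2 * diag B 1) = 1 := by
  set swap := renameEquiv ℤ (Equiv.swap (1 : Fin 3) 2)
  have hG'G : G' = swap G := by
    ext d
    rw [hG', coeff_renameEquiv, hG]
    simp [Finsupp.eq_zero_iff_fin_three, Equiv.swap_apply_of_ne_of_ne, add_comm, and_comm]
  have hD : swap (diag B 1) = diag B 1 := by
    ext d
    rw [coeff_renameEquiv, coeff_diag, coeff_diag]
    simp [Equiv.swap_apply_of_ne_of_ne]
    rw [add_comm (d 2), hB.augment_comm]
  have hX : swap (X 1) = X 2 := by simp [swap]
  simpa [hG'G, hD, hX] using congrArg swap (hB.mul_one_sub_X_one_mul_diag_eq_one hG)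

end IsB₃

/-- Variables are indexed `t = X 0`, `x = X 1`, `y = X 2`. The coefficient of `t^a x^b y^c` in `G`
collects the monomials `t^n x^{n-l} y^l` of the definition over the index `k < n - l`. -/
theorem gf_equation_F
    (B₃ : ℕ → ℕ → ℕ → ℕ)
    (hB1 : B₃ 1 0 0 = 1)
    (hrec : ∀ n k l, 1 < n → k + l < n →
      B₃ n k l = ∑ i ∈ Finset.range (k + 1), ∑ j ∈ Finset.range (l + 1), B₃ (n - 1) i j)
    (hzero : ∀ n k l, n ≤ k + l → B₃ n k l = 0)
    (F G G' : MvPowerSeries (Fin 3) ℤ)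
    (hF : ∀ d : Fin 3 →₀ ℕ, MvPowerSeries.coeff d F =
      if d = 0 then 1 else
        if d 1 + d 2 < d 0 then (B₃ (d 0) (d 1) (d 2) : ℤ) else 0)
    (hG : ∀ d : Fin 3 →₀ ℕ, MvPowerSeries.coeff d G =
      if d = 0 then 1 else
        if 1 ≤ d 1 ∧ d 0 = d 1 + d 2 then
          ∑ k ∈ Finset.range (d 1), (B₃ (d 0) k (d 2) : ℤ) else 0)
    (hG' : ∀ d : Fin 3 →₀ ℕ, MvPowerSeries.coeff d G' =
      if d = 0 then 1 else
        if 1 ≤ d 2 ∧ d 0 = d 1 + d 2 then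
          ∑ k ∈ Finset.range (d 2), (B₃ (d 0) k (d 1) : ℤ) else 0) :
    F = 1 + (MvPowerSeries.X 0) * G * G' * F := by
  have hB : IsB₃ B₃ := ⟨hB1, hrec, hzero⟩
  set D := IsB₃.diag B₃ 1
  have hF1 : F * (1 - D) = 1 := hB.mul_one_sub_diag_eq_one hF
  have hG1 : G * (1 - X 1 * D) = 1 := hB.mul_one_sub_X_one_mul_diag_eq_one hG
  have hG'1 : G' * (1 - X 2 * D) = 1 := hB.mul_one_sub_X_two_mul_diag_eq_one hG hG'
  rw [hB.X_zero_eq]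
  linear_combination hF1 - D * F * G' * (1 - X 2 * D) * hG1 - D * F * hG'1
end

section
/- In the ring of formal power series in three variables t, x, y over ℤ, let F = 1 + ∑_{n≥1, k+l<n} B₃(n,k,l)·t^n·x^k·y^l, let G = 1 + ∑_{n≥1, k+l<n} B₃(n,k,l)·t^n·x^{n−l}·y^l, and let G~ denote G with the variables x and y exchanged. Then F·(1 − t·G·G~) = 1, i.e., F is the multiplicative inverse of 1 − t·G·G~. -/
/-!
Write `f(n,k,l)` for the coefficient of `t^n x^k y^l` in `F`. For `k + l < n` the recursion
for `B₃` says that the mixed difference `f(n,k,l) - f(n,k-1,l) - f(n,k,l-1) + f(n,k-1,l-1)`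
equals `f(n-1,k,l)`; hence `F·((1-x)(1-y) - t)` only sees the diagonals `k + l ∈ {n, n+1, n+2}`
and can be written through the series `W_r = ∑ f(k+l+r, k, l) t^(k+l) x^k y^l`.
The same recursion along the diagonals gives `W_(r+1) = W_r + t((x+y) W_(r+2) - t x y W_(r+3))`
with `W_0 = 1`, which forces `W_r = W^r` for `W = W_1` by induction on the `t`-adic order;
in particular `W (1 - t x W)(1 - t y W) = 1`. Summing the recursion along a column gives
`G = W_1 - t y W_2 = W (1 - t y W)` and symmetrically `G~ = W (1 - t x W)`, so `G G~ = W`,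
and `F (1 - t W) = 1` follows after cancelling the unit `(1-x)(1-y) - t`.
-/

open Finset MvPowerSeries

theorem eq_pow_of_recurrence {R : Type*} [CommRing R] {t a b : R}
    (ht : ∀ x : R, (∀ s, t ^ s ∣ x) → x = 0) {W : ℕ → R} (h0 : W 0 = 1)
    (hW : ∀ r, W (r + 1) = W r + t * (a * W (r + 2) + b * W (r + 3))) (r : ℕ) :
    W r = W 1 ^ r := by
  set D : ℕ → R := fun r => W r - W 1 ^ r with hD
  have hD_succ : ∀ r, D (r + 1) =
      D r + t * (a * D (r + 2) + b * D (r + 3)) - W 1 ^ r * t * (a * D 2 + b * D 3) := by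
    intro r
    simp only [hD]
    linear_combination hW r - W 1 ^ r * hW 0 - W 1 ^ r * h0
  -- Every term of `hD_succ` except `D r` is `t` times a combination of the `D`'s, so
  -- `t ^ s ∣ D` everywhere gives `t ^ (s + 1) ∣ D` everywhere, by induction on the index.
  have hdvd : ∀ s r, t ^ s ∣ D r := by
    intro s
    induction s with
    | zero => simp
    | succ s ih =>
      have ht_mul : ∀ x y, t ^ (s + 1) ∣ t * (a * D x + b * D y) := fun x y =>
        pow_succ' t s ▸ mul_dvd_mul_left t
          (dvd_add (dvd_mul_of_dvd_right (ih x) a) (dvd_mul_of_dvd_right (ih y) b))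
      intro r
      induction r with
      | zero => simp [hD, h0]
      | succ r ihr =>
        rw [hD_succ, mul_assoc]
        exact dvd_sub (dvd_add ihr (ht_mul _ _)) (dvd_mul_of_dvd_right (ht_mul _ _) _)
  exact sub_eq_zero.mp (ht _ fun s => hdvd s r)

theorem MvPowerSeries.eq_zero_of_forall_X_pow_dvd {σ R : Type*} [Semiring R] (i : σ)
    {φ : MvPowerSeries σ R} (h : ∀ s, X i ^ s ∣ φ) : φ = 0 := by
  ext d
  exact X_pow_dvd_iff.mp (h (d i + 1)) d (Nat.lt_succ_self _)

theorem MvPowerSeries.coeff_X_mul {σ R : Type*} [Semiring R] (i : σ) (φ : MvPowerSeries σ R)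
    (d : σ →₀ ℕ) :
    coeff d (X i * φ) = if d i = 0 then 0 else coeff (d - Finsupp.single i 1) φ := by
  rw [X_def, coeff_monomial_mul, one_mul]
  simp [Finsupp.single_le_iff, Nat.one_le_iff_ne_zero]

namespace B3

theorem fin_three_eq_zero_iff {d : Fin 3 →₀ ℕ} :
    d = 0 ↔ d 0 = 0 ∧ d 1 = 0 ∧ d 2 = 0 := by
  constructor
  · rintro rfl
    simp
  · rintro ⟨h0, h1, h2⟩
    ext i
    fin_cases i <;> assumption

def seriesOf (a : ℤ → ℤ → ℤ → ℤ) : MvPowerSeries (Fin 3) ℤ :=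
  fun d => a (d 0) (d 1) (d 2)

@[simp] theorem coeff_seriesOf (a : ℤ → ℤ → ℤ → ℤ) (d : Fin 3 →₀ ℕ) :
    coeff d (seriesOf a) = a (d 0) (d 1) (d 2) := rfl

theorem seriesOf_add (a b : ℤ → ℤ → ℤ → ℤ) :
    seriesOf a + seriesOf b = seriesOf fun n k l => a n k l + b n k l := rfl

theorem seriesOf_sub (a b : ℤ → ℤ → ℤ → ℤ) :
    seriesOf a - seriesOf b = seriesOf fun n k l => a n k l - b n k l := rfl

theorem seriesOf_congr {a b : ℤ → ℤ → ℤ → ℤ}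
    (h : ∀ n k l, 0 ≤ n → 0 ≤ k → 0 ≤ l → a n k l = b n k l) :
    seriesOf a = seriesOf b := by
  ext d
  exact h _ _ _ (Nat.cast_nonneg _) (Nat.cast_nonneg _) (Nat.cast_nonneg _)

theorem one_eq_seriesOf :
    (1 : MvPowerSeries (Fin 3) ℤ) =
      seriesOf fun n k l => if n = 0 ∧ k = 0 ∧ l = 0 then 1 else 0 := by
  ext d
  simp [coeff_one, fin_three_eq_zero_iff]

theorem X_zero_mul_seriesOf {a : ℤ → ℤ → ℤ → ℤ} (ha : ∀ k l, a (-1) k l = 0) :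
    X 0 * seriesOf a = seriesOf fun n k l => a (n - 1) k l := by
  ext d
  rw [coeff_X_mul]
  split_ifs with h
  · simp [h, ha]
  · simp [Nat.cast_sub (Nat.one_le_iff_ne_zero.mpr h)]

theorem X_one_mul_seriesOf {a : ℤ → ℤ → ℤ → ℤ} (ha : ∀ n l, a n (-1) l = 0) :
    X 1 * seriesOf a = seriesOf fun n k l => a n (k - 1) l := by
  ext d
  rw [coeff_X_mul]
  split_ifs with h
  · simp [h, ha]
  · simp [Nat.cast_sub (Nat.one_le_iff_ne_zero.mpr h)]

theorem X_two_mul_seriesOf {a : ℤ → ℤ → ℤ → ℤ} (ha : ∀ n k, a n k (-1) = 0) :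
    X 2 * seriesOf a = seriesOf fun n k l => a n k (l - 1) := by
  ext d
  rw [coeff_X_mul]
  split_ifs with h
  · simp [h, ha]
  · simp [Nat.cast_sub (Nat.one_le_iff_ne_zero.mpr h)]

structure IsB3Array (B : ℕ → ℕ → ℕ → ℕ) : Prop where
  one_zero_zero : B 1 0 0 = 1
  eq_sum : ∀ n k l, 1 < n → k + l < n →
    B n k l = ∑ i ∈ range (k + 1), ∑ j ∈ range (l + 1), B (n - 1) i j
  eq_zero : ∀ n k l, n ≤ k + l → B n k l = 0

variable {B : ℕ → ℕ → ℕ → ℕ}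

theorem IsB3Array.symm (hB : IsB3Array B) (n k l : ℕ) : B n k l = B n l k := by
  induction n using Nat.strong_induction_on generalizing k l with
  | _ n ih =>
    rcases le_or_gt n (k + l) with h | h
    · rw [hB.eq_zero n k l h, hB.eq_zero n l k (by omega)]
    rcases Nat.lt_or_ge n 2 with hn | hn
    · obtain rfl : k = 0 := by omega
      obtain rfl : l = 0 := by omega
      rfl
    rw [hB.eq_sum n k l hn h, hB.eq_sum n l k hn (by omega), Finset.sum_comm]
    exact sum_congr rfl fun j _ => sum_congr rfl fun i _ => ih (n - 1) (by omega) i j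

/-- The coefficient of `t^n x^k y^l` in `F`, extended by zero to all of `ℤ³` so that
multiplication by a variable is a plain index shift. -/
def fcoeff (B : ℕ → ℕ → ℕ → ℕ) (n k l : ℤ) : ℤ :=
  if n = 0 ∧ k = 0 ∧ l = 0 then 1
  else if 0 ≤ k ∧ 0 ≤ l ∧ k + l < n then B n.toNat k.toNat l.toNat else 0

theorem fcoeff_eq_zero {n k l : ℤ} (h : ¬(0 ≤ k ∧ 0 ≤ l ∧ k + l < n))
    (h0 : ¬(n = 0 ∧ k = 0 ∧ l = 0)) : fcoeff B n k l = 0 := by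
  rw [fcoeff, if_neg h0, if_neg h]

theorem fcoeff_zero_zero_zero : fcoeff B 0 0 0 = 1 := by simp [fcoeff]

theorem fcoeff_of_neg {n k l : ℤ} (h : n < 0 ∨ k < 0 ∨ l < 0) : fcoeff B n k l = 0 :=
  fcoeff_eq_zero (by omega) (by omega)

theorem fcoeff_natCast (hB : IsB3Array B) {n : ℕ} (hn : 0 < n) (k l : ℕ) :
    fcoeff B n k l = B n k l := by
  rw [fcoeff, if_neg (by omega)]
  split_ifs with h
  · simp
  · rw [hB.eq_zero n k l (by omega), Nat.cast_zero]

theorem fcoeff_symm (hB : IsB3Array B) (n k l : ℤ) : fcoeff B n k l = fcoeff B n l k := by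
  unfold fcoeff
  rw [hB.symm]
  exact if_congr (by omega) rfl (if_congr (by omega) rfl rfl)

theorem fcoeff_sub_one_sub_one_eq_sum (hB : IsB3Array B) {n : ℕ} (hn : 2 ≤ n) (k l : ℕ)
    (h : k + l ≤ n + 1) :
    fcoeff B n (k - 1) (l - 1) = ∑ i ∈ range k, ∑ j ∈ range l, fcoeff B (n - 1) i j := by
  rcases k with _ | k
  · simp [fcoeff_eq_zero]
  rcases l with _ | l
  · simp [fcoeff_eq_zero]
  push_cast
  rw [add_sub_cancel_right, add_sub_cancel_right, fcoeff_natCast hB (by omega),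
    hB.eq_sum n k l (by omega) (by omega)]
  push_cast
  refine sum_congr rfl fun i _ => sum_congr rfl fun j _ => ?_
  rw [← fcoeff_natCast hB (by omega), Nat.cast_sub (by omega), Nat.cast_one]

theorem fcoeff_rec (hB : IsB3Array B) {n k l : ℤ} (hk : 0 ≤ k) (hl : 0 ≤ l) (h : k + l < n) :
    fcoeff B n k l =
      fcoeff B (n - 1) k l + fcoeff B n (k - 1) l + fcoeff B n k (l - 1)
        - fcoeff B n (k - 1) (l - 1) := by
  lift k to ℕ using hk
  lift l to ℕ using hl
  lift n to ℕ using (by omega)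
  rcases Nat.lt_or_ge n 2 with hn | hn
  · obtain rfl : n = 1 := by omega
    obtain rfl : k = 0 := by omega
    obtain rfl : l = 0 := by omega
    simp [fcoeff, hB.one_zero_zero]
  have e := fun a b h => fcoeff_sub_one_sub_one_eq_sum hB hn a b h
  have e11 := e (k + 1) (l + 1) (by omega)
  have e01 := e k (l + 1) (by omega)
  have e10 := e (k + 1) l (by omega)
  push_cast at e11 e01 e10
  simp only [add_sub_cancel_right] at e11 e01 e10
  rw [e11, e01, e10, e k l (by omega)]
  simp only [sum_range_succ, sum_add_distrib]
  ring

theorem fcoeff_sub_fcoeff_eq_sum (hB : IsB3Array B) {n l : ℤ} (k : ℕ) (hl : 0 ≤ l)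
    (h : k + l < n) :
    fcoeff B n k l - fcoeff B n k (l - 1) = ∑ i ∈ range (k + 1), fcoeff B (n - 1) i l := by
  induction k with
  | zero =>
    simp only [Nat.cast_zero] at h ⊢
    rw [fcoeff_rec hB le_rfl hl (by simpa using h)]
    simp [fcoeff_eq_zero]
  | succ k ih =>
    rw [fcoeff_rec hB (by positivity) hl h, sum_range_succ, ← ih (by omega)]
    push_cast
    ring_nf

theorem eq_seriesOf_fcoeff {F : MvPowerSeries (Fin 3) ℤ}
    (hF : ∀ d : Fin 3 →₀ ℕ, coeff d F =
      if d = 0 then 1 else if d 1 + d 2 < d 0 then (B (d 0) (d 1) (d 2) : ℤ) else 0) :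
    F = seriesOf (fcoeff B) := by
  ext d
  rw [hF, coeff_seriesOf, fcoeff]
  simp only [fin_three_eq_zero_iff, Int.natCast_eq_zero, Nat.cast_nonneg, true_and,
    Int.toNat_natCast, ← Nat.cast_add, Nat.cast_lt]

def subdiagCoeff (B : ℕ → ℕ → ℕ → ℕ) (r : ℕ) (n k l : ℤ) : ℤ :=
  if n = k + l then fcoeff B (n + r) k l else 0

theorem subdiagCoeff_of_neg {r : ℕ} {n k l : ℤ} (h : n < 0 ∨ k < 0 ∨ l < 0) :
    subdiagCoeff B r n k l = 0 := by
  unfold subdiagCoeff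
  split_ifs
  · exact fcoeff_of_neg (by omega)
  · rfl

theorem subdiagCoeff_symm (hB : IsB3Array B) (r : ℕ) (n k l : ℤ) :
    subdiagCoeff B r n k l = subdiagCoeff B r n l k := by
  rw [subdiagCoeff, subdiagCoeff, fcoeff_symm hB, add_comm k]

theorem subdiagCoeff_one_sub_subdiagCoeff_two (hB : IsB3Array B) (n k l : ℕ) :
    subdiagCoeff B 1 n k l - subdiagCoeff B 2 (n - 1) k (l - 1) =
      if n = 0 ∧ k = 0 ∧ l = 0 then 1
      else if 1 ≤ k ∧ n = k + l then ∑ i ∈ range k, (B n i l : ℤ) else 0 := by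
  unfold subdiagCoeff
  by_cases hd : n = k + l
  · subst hd
    push_cast
    rw [if_pos rfl, if_pos (by ring), show (k + l : ℤ) - 1 + 2 = k + l + 1 by ring,
      fcoeff_sub_fcoeff_eq_sum hB k (Nat.cast_nonneg l) (by omega), add_sub_cancel_right,
      sum_range_succ]
    rcases Nat.eq_zero_or_pos k with rfl | hk
    · simp [fcoeff]
    · rw [fcoeff_eq_zero (by omega) (by omega), if_neg (by omega), if_pos (by omega), add_zero]
      exact sum_congr rfl fun i hi => by exact_mod_cast fcoeff_natCast hB (by omega) i l
  · rw [if_neg (by omega), if_neg (by omega), if_neg (by omega), if_neg (by omega), sub_zero]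

/-- The series `W_r` of the proof sketch at the top. -/
def subdiag (B : ℕ → ℕ → ℕ → ℕ) (r : ℕ) : MvPowerSeries (Fin 3) ℤ :=
  seriesOf (subdiagCoeff B r)

theorem subdiag_zero : subdiag B 0 = 1 := by
  rw [one_eq_seriesOf, subdiag]
  refine seriesOf_congr fun n k l hn hk hl => ?_
  unfold subdiagCoeff
  split_ifs <;> grind [fcoeff_eq_zero, fcoeff_zero_zero_zero]

theorem subdiag_succ (hB : IsB3Array B) (r : ℕ) :
    subdiag B (r + 1) = subdiag B r
      + X 0 * ((X 1 + X 2) * subdiag B (r + 2) - X 0 * X 1 * X 2 * subdiag B (r + 3)) := by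
  simp only [subdiag, mul_add, add_mul, mul_sub, mul_assoc]
  simp only [X_zero_mul_seriesOf, X_one_mul_seriesOf, X_two_mul_seriesOf, subdiagCoeff_of_neg,
    Int.reduceSub, Int.reduceLT, true_or, or_true, implies_true, seriesOf_add, seriesOf_sub]
  refine seriesOf_congr fun n k l hn hk hl => ?_
  unfold subdiagCoeff
  split_ifs <;> try omega
  rw [fcoeff_rec hB hk hl (by omega)]
  push_cast
  ring_nf

theorem subdiag_eq_pow (hB : IsB3Array B) (r : ℕ) : subdiag B r = subdiag B 1 ^ r :=
  eq_pow_of_recurrence (t := X 0) (a := X 1 + X 2) (b := -(X 0 * X 1 * X 2))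
    (fun _ => eq_zero_of_forall_X_pow_dvd 0) subdiag_zero
    (fun r => by rw [subdiag_succ hB]; ring) r

theorem subdiag_one_mul_eq_one (hB : IsB3Array B) :
    subdiag B 1 * (1 - X 0 * X 1 * subdiag B 1) * (1 - X 0 * X 2 * subdiag B 1) = 1 := by
  have h : subdiag B 1 = _ := subdiag_succ hB 0
  rw [subdiag_zero, subdiag_eq_pow hB 2, subdiag_eq_pow hB 3] at h
  linear_combination h

theorem seriesOf_fcoeff_mul (hB : IsB3Array B) :
    seriesOf (fcoeff B) * ((1 - X 1) * (1 - X 2) - X 0) =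
      (1 - X 1) * (1 - X 2) * subdiag B 0 - X 0 * (X 1 + X 2 - X 1 * X 2) * subdiag B 1
        + X 0 * X 0 * X 1 * X 2 * subdiag B 2 := by
  rw [mul_comm]
  simp only [subdiag, mul_add, add_mul, mul_sub, sub_mul, one_mul, mul_assoc]
  simp only [X_zero_mul_seriesOf, X_one_mul_seriesOf, X_two_mul_seriesOf, subdiagCoeff_of_neg,
    fcoeff_of_neg, Int.reduceSub, Int.reduceLT, true_or, or_true, implies_true, seriesOf_add,
    seriesOf_sub]
  refine seriesOf_congr fun n k l hn hk hl => ?_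
  unfold subdiagCoeff
  rcases lt_or_ge (k + l) n with h | h
  · rw [fcoeff_rec hB hk hl h]
    split_ifs <;> omega
  · split_ifs <;> try omega
    all_goals simp (disch := omega) only [fcoeff_eq_zero]; ring_nf

theorem eq_subdiag_sub_X_two_mul (hB : IsB3Array B) {G : MvPowerSeries (Fin 3) ℤ}
    (hG : ∀ d : Fin 3 →₀ ℕ, coeff d G =
      if d = 0 then 1 else
        if 1 ≤ d 1 ∧ d 0 = d 1 + d 2 then
          ∑ k ∈ range (d 1), (B (d 0) k (d 2) : ℤ) else 0) :
    G = subdiag B 1 - X 0 * X 2 * subdiag B 2 := by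
  simp only [subdiag, mul_assoc]
  simp only [X_zero_mul_seriesOf, X_two_mul_seriesOf, subdiagCoeff_of_neg, Int.reduceLT,
    true_or, or_true, implies_true, seriesOf_sub]
  ext d
  rw [hG, coeff_seriesOf, subdiagCoeff_one_sub_subdiagCoeff_two hB]
  simp only [fin_three_eq_zero_iff]

theorem eq_subdiag_sub_X_one_mul (hB : IsB3Array B) {G : MvPowerSeries (Fin 3) ℤ}
    (hG : ∀ d : Fin 3 →₀ ℕ, coeff d G =
      if d = 0 then 1 else
        if 1 ≤ d 2 ∧ d 0 = d 1 + d 2 then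
          ∑ k ∈ range (d 2), (B (d 0) k (d 1) : ℤ) else 0) :
    G = subdiag B 1 - X 0 * X 1 * subdiag B 2 := by
  simp only [subdiag, mul_assoc]
  simp only [X_zero_mul_seriesOf, X_one_mul_seriesOf, subdiagCoeff_of_neg, Int.reduceLT,
    true_or, or_true, implies_true, seriesOf_sub]
  ext d
  rw [hG, coeff_seriesOf, subdiagCoeff_symm hB 1, subdiagCoeff_symm hB 2,
    subdiagCoeff_one_sub_subdiagCoeff_two hB]
  simp only [fin_three_eq_zero_iff, add_comm (d 1), and_comm (a := d 1 = 0)]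

end B3

open B3

/-- With `F = 1 + ∑_{n≥1, k+l<n} B₃(n,k,l) t^n x^k y^l`,
`G = 1 + ∑_{n≥1, k+l<n} B₃(n,k,l) t^n x^{n-l} y^l` and `G'` the series `G` with `x`
and `y` exchanged (in `ℤ[[t,x,y]]`, variables `t = X 0`, `x = X 1`, `y = X 2`),
one has `F·(1 - t·G·G') = 1`, i.e. `F` is the inverse of `1 - t·G·G'`. -/
theorem gf_F_inverse
    (B₃ : ℕ → ℕ → ℕ → ℕ)
    (hB1 : B₃ 1 0 0 = 1)
    (hrec : ∀ n k l, 1 < n → k + l < n →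
      B₃ n k l = ∑ i ∈ Finset.range (k + 1), ∑ j ∈ Finset.range (l + 1), B₃ (n - 1) i j)
    (hzero : ∀ n k l, n ≤ k + l → B₃ n k l = 0)
    (F G G' : MvPowerSeries (Fin 3) ℤ)
    (hF : ∀ d : Fin 3 →₀ ℕ, MvPowerSeries.coeff d F =
      if d = 0 then 1 else
        if d 1 + d 2 < d 0 then (B₃ (d 0) (d 1) (d 2) : ℤ) else 0)
    (hG : ∀ d : Fin 3 →₀ ℕ, MvPowerSeries.coeff d G =
      if d = 0 then 1 else
        if 1 ≤ d 1 ∧ d 0 = d 1 + d 2 then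
          ∑ k ∈ Finset.range (d 1), (B₃ (d 0) k (d 2) : ℤ) else 0)
    (hG' : ∀ d : Fin 3 →₀ ℕ, MvPowerSeries.coeff d G' =
      if d = 0 then 1 else
        if 1 ≤ d 2 ∧ d 0 = d 1 + d 2 then
          ∑ k ∈ Finset.range (d 2), (B₃ (d 0) k (d 1) : ℤ) else 0) :
    F * (1 - (MvPowerSeries.X 0) * G * G') = 1 := by
  have hB : IsB3Array B₃ := ⟨hB1, hrec, hzero⟩
  set W := subdiag B₃ 1
  have hW := subdiag_one_mul_eq_one hB
  have hGG' : G * G' = W := by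
    rw [eq_subdiag_sub_X_two_mul hB hG, eq_subdiag_sub_X_one_mul hB hG', subdiag_eq_pow hB 2]
    linear_combination W * hW
  have hFK := seriesOf_fcoeff_mul hB
  rw [subdiag_zero, subdiag_eq_pow hB 2, ← eq_seriesOf_fcoeff hF] at hFK
  have hK : IsUnit ((1 - X 1) * (1 - X 2) - X 0 : MvPowerSeries (Fin 3) ℤ) := by
    simp [isUnit_iff_constantCoeff]
  refine hK.mul_left_cancel ?_
  rw [mul_assoc (X 0), hGG']
  linear_combination (1 - X 0 * W) * hFK - X 0 * hW
end

section
/- Fix an integer p≥2 and let B_p : ℕ → (Fin (p−1) → ℕ) → ℕ satisfy: B_p(1,0)=1 (where 0 is the zero tuple); for all n>1 and every tuple k=(k₁,…,k_{p−1}) with k₁+⋯+k_{p−1}<n, B_p(n,k) = ∑ B_p(n−1,i), the sum over all tuples i with 0≤i_j≤k_j for each j; and B_p(n,k)=0 whenever k₁+⋯+k_{p−1}≥n. Then for every positive integer n, ∑_k B_p(n,k) = C_p(n), where C_p(n) = (1/((p−1)n+1))·binom(pn,n); equivalently ((p−1)n+1)·∑_k B_p(n,k) = binom(pn,n). -/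
/-!
Put `q = p - 1` and let `T n m = ∑_{|k| = m} B n k` be the slice sums of the `n`-th layer.
Writing each `k` of the recursion as `d + i` with `i` in the box below `k`, one finds
`T (n+1) m = ∑_{a+b=m} multichoose q a * T n b` for `m ≤ n`: up to degree `n` the generating
series of layer `n + 1` is that of layer `n` times `(1 - X)^(-q)`. The series
`F r = (1 - X)^(-r) - q X (1 - X)^(-r-1)` satisfy `(1 - X)^(-d) F r = F (r + d)` and
`[Xⁿ] F (q n) = 0 = T n n`, so induction on `n` gives `T n m = [Xᵐ] F (q n)` for `m ≤ n`.
Summing over `m ≤ n` multiplies by `(1 - X)⁻¹`, so the layer sum is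
`[Xⁿ] F (q n + 1) = C(pn, n) - q C(pn, n - 1)`, and `(q n + 1)` times this is `C(pn, n)`.
-/

open Finset Finset.Nat PowerSeries

theorem card_antidiagonalTuple (q n : ℕ) : #(antidiagonalTuple q n) = q.multichoose n := by
  rw [← piAntidiag_univ_fin_eq_antidiagonalTuple, ← map_sym_eq_piAntidiag, card_map, sym_univ,
    card_univ, Sym.card_sym_eq_multichoose, Fintype.card_fin]

section Simplex

variable {M : Type*} [AddCommMonoid M] {q : ℕ}

theorem mem_piFinset_range_succ_iff {k i : Fin q → ℕ} :
    i ∈ Fintype.piFinset (fun j => range (k j + 1)) ↔ i ≤ k := by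
  simp [Pi.le_def]

theorem sum_antidiagonalTuple_sum_piFinset_range_succ (f : (Fin q → ℕ) → M) (m : ℕ) :
    ∑ k ∈ antidiagonalTuple q m, ∑ i ∈ Fintype.piFinset (fun j => range (k j + 1)), f i
      = ∑ ab ∈ antidiagonal m,
          q.multichoose ab.1 • ∑ i ∈ antidiagonalTuple q ab.2, f i := by
  simp_rw [← card_antidiagonalTuple, ← sum_const, ← sum_product' (f := fun _ i => f i),
    sum_sigma']
  refine sum_nbij' (fun ki => ⟨(m - ∑ j, ki.2 j, ∑ j, ki.2 j), (ki.1 - ki.2, ki.2)⟩)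
    (fun adi => ⟨adi.2.1 + adi.2.2, adi.2.2⟩) ?_ ?_ ?_ ?_ (fun _ _ => rfl)
  · rintro ⟨k, i⟩ hki
    simp only [mem_sigma, mem_antidiagonalTuple, mem_piFinset_range_succ_iff] at hki
    obtain ⟨hk, hik⟩ := hki
    have hsplit : ∑ j, (k - i) j + ∑ j, i j = m := by
      rw [← sum_add_distrib, ← hk]
      simp only [← Pi.add_apply, tsub_add_cancel_of_le hik]
    simp only [mem_sigma, HasAntidiagonal.mem_antidiagonal, mem_product, mem_antidiagonalTuple,
      and_true]
    constructor <;> omega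
  · rintro ⟨⟨a, b⟩, d, i⟩ hadi
    simp only [mem_sigma, HasAntidiagonal.mem_antidiagonal, mem_product,
      mem_antidiagonalTuple] at hadi
    simp only [mem_sigma, mem_antidiagonalTuple, mem_piFinset_range_succ_iff, Pi.add_apply,
      sum_add_distrib]
    exact ⟨by omega, le_add_self⟩
  · rintro ⟨k, i⟩ hki
    simp only [mem_sigma, mem_piFinset_range_succ_iff] at hki
    simp only [tsub_add_cancel_of_le hki.2]
  · rintro ⟨⟨a, b⟩, d, i⟩ hadi
    simp only [mem_sigma, HasAntidiagonal.mem_antidiagonal, mem_product,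
      mem_antidiagonalTuple] at hadi
    simp only [add_tsub_cancel_right, hadi.2.2, Sigma.mk.injEq, Prod.mk.injEq, heq_eq_eq, and_true]
    omega

theorem sum_piFinset_range_eq_sum_range_sum_antidiagonalTuple {f : (Fin q → ℕ) → M} {n : ℕ}
    (hf : ∀ k, n ≤ ∑ j, k j → f k = 0) :
    ∑ k ∈ Fintype.piFinset (fun _ => range n), f k
      = ∑ m ∈ range n, ∑ k ∈ antidiagonalTuple q m, f k := by
  calc ∑ k ∈ Fintype.piFinset (fun _ => range n), f k
      = ∑ k ∈ Fintype.piFinset (fun _ => range n) with ∑ j, k j < n, f k :=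
        (sum_filter_of_ne fun k _ hk => not_le.1 (mt (hf k) hk)).symm
    _ = ∑ m ∈ range n, ∑ k ∈ {k ∈ Fintype.piFinset (fun _ => range n) | ∑ j, k j < n}
          with ∑ j, k j = m, f k :=
        (sum_fiberwise_of_maps_to (fun k hk => mem_range.2 (mem_filter.1 hk).2) f).symm
    _ = ∑ m ∈ range n, ∑ k ∈ antidiagonalTuple q m, f k := by
        refine sum_congr rfl fun m hm => sum_congr ?_ fun _ _ => rfl
        ext k
        simp only [mem_filter, Fintype.mem_piFinset, mem_range, mem_antidiagonalTuple] at hm ⊢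
        refine ⟨fun h => h.2, fun h => ⟨⟨fun j => ?_, h ▸ hm⟩, h⟩⟩
        exact (single_le_sum (fun _ _ => Nat.zero_le _) (mem_univ j)).trans_lt (h ▸ hm)

end Simplex

theorem PowerSeries.coeff_invOneSubPow {S : Type*} [CommRing S] (d n : ℕ) :
    coeff n (invOneSubPow S d : S⟦X⟧) = d.multichoose n := by
  cases d with
  | zero => cases n <;> simp [invOneSubPow_zero, coeff_one]
  | succ d =>
    rw [invOneSubPow_val_succ_eq_mk_add_choose, coeff_mk, Nat.multichoose_eq, Nat.choose_symm_add,
      Nat.add_right_comm, Nat.add_sub_cancel]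

noncomputable def fussBallotSeries (q r : ℕ) : ℤ⟦X⟧ :=
  (invOneSubPow ℤ r : ℤ⟦X⟧) - C (q : ℤ) * (X * (invOneSubPow ℤ (r + 1) : ℤ⟦X⟧))

namespace fussBallotSeries

theorem invOneSubPow_mul (q d r : ℕ) :
    (invOneSubPow ℤ d : ℤ⟦X⟧) * fussBallotSeries q r = fussBallotSeries q (r + d) := by
  simp only [fussBallotSeries, add_comm _ d, invOneSubPow_add, Units.val_mul]
  ring

theorem coeff_zero (q r : ℕ) : coeff 0 (fussBallotSeries q r) = 1 := by
  rw [fussBallotSeries, map_sub, coeff_C_mul, coeff_zero_X_mul, coeff_invOneSubPow,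
    Nat.multichoose_zero_right]
  simp

theorem coeff_succ (q r m : ℕ) :
    coeff (m + 1) (fussBallotSeries q r) = r.multichoose (m + 1) - q * (r + 1).multichoose m := by
  rw [fussBallotSeries, map_sub, coeff_C_mul, coeff_succ_X_mul, coeff_invOneSubPow,
    coeff_invOneSubPow]

theorem coeff_self (q : ℕ) {n : ℕ} (hn : 0 < n) : coeff n (fussBallotSeries q (q * n)) = 0 := by
  obtain ⟨m, rfl⟩ := Nat.exists_eq_add_one_of_ne_zero hn.ne'
  have h := Nat.choose_succ_right_eq (q * (m + 1) + m) m
  rw [Nat.add_sub_cancel] at h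
  have key : (q * (m + 1) + m).choose (m + 1) = q * (q * (m + 1) + m).choose m :=
    Nat.eq_of_mul_eq_mul_right (by omega : 0 < m + 1) (h.trans (by ring))
  rw [coeff_succ, Nat.multichoose_eq, Nat.multichoose_eq, sub_eq_zero,
    show q * (m + 1) + (m + 1) - 1 = q * (m + 1) + m by omega,
    show q * (m + 1) + 1 + m - 1 = q * (m + 1) + m by omega, key]
  push_cast
  rfl

theorem mul_coeff_self_succ (q : ℕ) {n : ℕ} (hn : 0 < n) :
    (q * n + 1 : ℤ) * coeff n (fussBallotSeries q (q * n + 1)) = ((q + 1) * n).choose n := by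
  obtain ⟨m, rfl⟩ := Nat.exists_eq_add_one_of_ne_zero hn.ne'
  have h := Nat.choose_succ_right_eq ((q + 1) * (m + 1)) m
  rw [show (q + 1) * (m + 1) - m = q * (m + 1) + 1 by grind] at h
  rw [coeff_succ, Nat.multichoose_eq, Nat.multichoose_eq,
    show q * (m + 1) + 1 + (m + 1) - 1 = (q + 1) * (m + 1) by grind,
    show q * (m + 1) + 1 + 1 + m - 1 = (q + 1) * (m + 1) by grind]
  have hz := congrArg (Nat.cast : ℕ → ℤ) h
  push_cast at hz ⊢
  linear_combination (q : ℤ) * hz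

theorem sum_range_coeff (q r n : ℕ) :
    ∑ m ∈ range (n + 1), coeff m (fussBallotSeries q r)
      = coeff n (fussBallotSeries q (r + 1)) := by
  rw [← invOneSubPow_mul, mul_comm, coeff_mul, sum_antidiagonal_eq_sum_range_succ
    (fun i j => coeff i (fussBallotSeries q r) * coeff j (invOneSubPow ℤ 1 : ℤ⟦X⟧))]
  simp [coeff_invOneSubPow]

end fussBallotSeries

def sliceSum {q : ℕ} (B : ℕ → (Fin q → ℕ) → ℕ) (n m : ℕ) : ℕ :=
  ∑ k ∈ antidiagonalTuple q m, B n k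

structure IsFussCatalanArray (q : ℕ) (B : ℕ → (Fin q → ℕ) → ℕ) : Prop where
  apply_one_zero : B 1 0 = 1
  apply_eq_sum : ∀ n (k : Fin q → ℕ), 1 < n → ∑ j, k j < n →
    B n k = ∑ i ∈ Fintype.piFinset (fun j => range (k j + 1)), B (n - 1) i
  apply_eq_zero : ∀ n (k : Fin q → ℕ), n ≤ ∑ j, k j → B n k = 0

namespace IsFussCatalanArray

variable {q : ℕ} {B : ℕ → (Fin q → ℕ) → ℕ}

theorem sliceSum_eq_zero (hB : IsFussCatalanArray q B) {n m : ℕ} (h : n ≤ m) :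
    sliceSum B n m = 0 :=
  sum_eq_zero fun k hk => hB.apply_eq_zero n k ((mem_antidiagonalTuple.1 hk).symm ▸ h)

theorem sliceSum_succ (hB : IsFussCatalanArray q B) {n m : ℕ} (hn : 0 < n) (hm : m ≤ n) :
    sliceSum B (n + 1) m = ∑ ab ∈ antidiagonal m, q.multichoose ab.1 * sliceSum B n ab.2 := by
  have hrec : ∀ k ∈ antidiagonalTuple q m,
      B (n + 1) k = ∑ i ∈ Fintype.piFinset (fun j => range (k j + 1)), B n i := fun k hk =>
    hB.apply_eq_sum (n + 1) k (by omega)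
      ((mem_antidiagonalTuple.1 hk).symm ▸ Nat.lt_succ_of_le hm)
  rw [sliceSum, sum_congr rfl hrec, sum_antidiagonalTuple_sum_piFinset_range_succ]
  simp only [smul_eq_mul, sliceSum]

theorem sliceSum_eq_coeff (hB : IsFussCatalanArray q B) {n : ℕ} (hn : 0 < n) :
    ∀ m ≤ n, (sliceSum B n m : ℤ) = coeff m (fussBallotSeries q (q * n)) := by
  induction n, hn using Nat.le_induction with
  | base =>
    intro m hm
    interval_cases m
    · simp [sliceSum, antidiagonalTuple_zero_right, hB.apply_one_zero, fussBallotSeries.coeff_zero]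
    · rw [hB.sliceSum_eq_zero le_rfl, Nat.cast_zero]
      exact (fussBallotSeries.coeff_self q one_pos).symm
  | succ n hn ih =>
    intro m hm
    obtain hm | rfl := Nat.lt_succ_iff_lt_or_eq.1 (Nat.lt_succ_of_le hm)
    · rw [hB.sliceSum_succ hn (Nat.lt_succ_iff.1 hm), mul_add_one,
        ← fussBallotSeries.invOneSubPow_mul, coeff_mul, Nat.cast_sum]
      refine sum_congr rfl fun ab hab => ?_
      rw [Nat.cast_mul, coeff_invOneSubPow,
        ih ab.2 ((HasAntidiagonal.antidiagonal.snd_le hab).trans (Nat.lt_succ_iff.1 hm))]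
    · rw [hB.sliceSum_eq_zero le_rfl, fussBallotSeries.coeff_self q (by omega), Nat.cast_zero]

theorem mul_sum_piFinset_range_eq_choose (hB : IsFussCatalanArray q B) {n : ℕ} (hn : 0 < n) :
    (q * n + 1) * ∑ k ∈ Fintype.piFinset (fun _ : Fin q => range n), B n k
      = ((q + 1) * n).choose n := by
  have hslices : ∑ k ∈ Fintype.piFinset (fun _ : Fin q => range n), B n k
      = ∑ m ∈ range (n + 1), sliceSum B n m := by
    rw [sum_piFinset_range_eq_sum_range_sum_antidiagonalTuple (hB.apply_eq_zero n), sum_range_succ,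
      hB.sliceSum_eq_zero le_rfl, add_zero]
    rfl
  apply Nat.cast_injective (R := ℤ)
  calc (((q * n + 1) * ∑ k ∈ Fintype.piFinset (fun _ : Fin q => range n), B n k : ℕ) : ℤ)
      = (q * n + 1 : ℤ) * ∑ m ∈ range (n + 1), coeff m (fussBallotSeries q (q * n)) := by
        rw [hslices]
        push_cast
        exact congrArg _ <| sum_congr rfl fun m hm =>
          hB.sliceSum_eq_coeff hn m (Nat.lt_succ_iff.1 (mem_range.1 hm))
    _ = (q * n + 1 : ℤ) * coeff n (fussBallotSeries q (q * n + 1)) := by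
        rw [fussBallotSeries.sum_range_coeff]
    _ = ((q + 1) * n).choose n := fussBallotSeries.mul_coeff_self_succ q hn

end IsFussCatalanArray

/-- For fixed `p ≥ 2`, the sums of the slices of the `p`-dimensional
Fuss–Catalan array `B_p` are the order-`p` Fuss–Catalan numbers:
`((p-1)·n + 1) * ∑_k B_p n k = binom(p·n, n)` for every positive `n`.
(Since `B_p n k = 0` whenever `∑ k_j ≥ n`, summing each coordinate over `{0,…,n-1}`
captures all nonzero terms.) -/
theorem fuss_catalan_simplex_slice_sum
    (p : ℕ) (hp : 2 ≤ p)
    (B : ℕ → (Fin (p - 1) → ℕ) → ℕ)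
    (hB1 : B 1 0 = 1)
    (hrec : ∀ n (k : Fin (p - 1) → ℕ), 1 < n → (∑ j, k j) < n →
      B n k = ∑ i ∈ Fintype.piFinset (fun j => Finset.range (k j + 1)), B (n - 1) i)
    (hzero : ∀ n (k : Fin (p - 1) → ℕ), n ≤ (∑ j, k j) → B n k = 0) :
    ∀ n : ℕ, 0 < n →
      ((p - 1) * n + 1) * (∑ k ∈ Fintype.piFinset (fun _ : Fin (p - 1) => Finset.range n), B n k)
        = Nat.choose (p * n) n := by
  intro n hn
  rw [IsFussCatalanArray.mul_sum_piFinset_range_eq_choose ⟨hB1, hrec, hzero⟩ hn,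
    Nat.sub_add_cancel (by omega : 1 ≤ p)]
end

section
/- Fix an integer p≥2 and let B_p : ℕ → (Fin (p−1) → ℕ) → ℕ satisfy: B_p(1,0)=1; for all n>1 and every tuple k=(k₁,…,k_{p−1}) with k₁+⋯+k_{p−1}<n, B_p(n,k) = ∑_{0≤i≤k componentwise} B_p(n−1,i); and B_p(n,k)=0 whenever k₁+⋯+k_{p−1}≥n. Then for all n≥1 and all tuples k with k₁+⋯+k_{p−1}<n, B_p(n,k₁,…,k_{p−1}) = (∏_{i=1}^{p−1} binom(n+k_i−1, k_i))·(n−∑_{i=1}^{p−1} k_i)/n; equivalently n·B_p(n,k) = (∏_i binom(n+k_i−1,k_i))·(n−∑_i k_i). -/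
/-!
Induction on `n`, after clearing the denominator. Summing
`∏ⱼ C(n+iⱼ-1, iⱼ) · (n - ∑ⱼ iⱼ)` over the box `0 ≤ i ≤ k` factorises coordinatewise:
the hockey stick identity `∑_{m ≤ k} C(n+m-1, m) = C(n+k, k)` handles the product, and
`(n+1) ∑_{m ≤ k} m C(n+m-1, m) = n k C(n+k, k)` handles each term of `∑ⱼ iⱼ`, so the
sum is `n/(n+1) · ∏ⱼ C(n+kⱼ, kⱼ) · (n+1 - ∑ⱼ kⱼ)`.
-/

open Finset

namespace Nat

theorem sum_range_add_sub_one_choose (n k : ℕ) :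
    ∑ m ∈ range (k + 1), (n + m - 1).choose m = (n + k).choose k := by
  simp only [← multichoose_eq]
  rw [sum_range_multichoose, add_comm k n, choose_symm_add]

theorem succ_mul_add_choose_succ (n m : ℕ) :
    (m + 1) * (n + m).choose (m + 1) = n * (n + m).choose m := by
  rw [mul_comm, choose_succ_right_eq, Nat.add_sub_cancel, mul_comm]

theorem succ_mul_sum_range_mul_add_sub_one_choose (n k : ℕ) :
    (n + 1) * ∑ m ∈ range (k + 1), m * (n + m - 1).choose m = n * (k * (n + k).choose k) := by
  have shifted : ∑ m ∈ range (k + 1), m * (n + m - 1).choose m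
      = n * ∑ m ∈ range k, (n + m).choose m := by
    rw [sum_range_succ', mul_sum]
    simp only [zero_mul, add_zero, Nat.add_succ_sub_one]
    exact sum_congr rfl fun m _ => succ_mul_add_choose_succ n m
  rw [shifted, mul_left_comm]
  congr 1
  cases k with
  | zero => simp
  | succ k =>
    have hockey := sum_range_add_sub_one_choose (n + 1) k
    simp only [Nat.add_right_comm n 1, Nat.add_sub_cancel] at hockey
    rw [hockey, show n + (k + 1) = n + 1 + k by omega, Nat.add_right_comm,
      succ_mul_add_choose_succ]

end Nat

namespace Finset

theorem sum_piFinset_mul_prod {ι κ R : Type*} [Fintype ι] [DecidableEq ι] [CommSemiring R]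
    (t : ι → Finset κ) (f : ι → κ → R) (g : κ → R) (j : ι) :
    ∑ x ∈ Fintype.piFinset t, g (x j) * ∏ i, f i (x i)
      = (∑ m ∈ t j, g m * f j m) * ∏ i ∈ univ.erase j, ∑ m ∈ t i, f i m := by
  set f' := Function.update f j fun m => g m * f j m
  have weighted (x : ι → κ) : g (x j) * ∏ i, f i (x i) = ∏ i, f' i (x i) := by
    rw [← mul_prod_erase univ _ (mem_univ j), ← mul_prod_erase univ _ (mem_univ j), ← mul_assoc]
    congr 1
    · simp [f']
    · exact prod_congr rfl fun i hi => by simp [f', ne_of_mem_erase hi]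
  simp_rw [weighted, ← prod_univ_sum, ← mul_prod_erase univ _ (mem_univ j)]
  congr 1
  · simp [f']
  · exact prod_congr rfl fun i hi => by simp [f', ne_of_mem_erase hi]

theorem sum_le_sum_of_mem_piFinset_range {ι : Type*} [Fintype ι] [DecidableEq ι] {k x : ι → ℕ}
    (hx : x ∈ Fintype.piFinset fun j => range (k j + 1)) : ∑ i, x i ≤ ∑ i, k i :=
  sum_le_sum fun i _ => Nat.lt_succ_iff.mp (mem_range.mp (Fintype.mem_piFinset.mp hx i))

end Finset

theorem succ_mul_sum_piFinset_prod_choose_mul_sub {ι : Type*} [Fintype ι] [DecidableEq ι]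
    (n : ℕ) (k : ι → ℕ) :
    ((n : ℤ) + 1) * ∑ x ∈ Fintype.piFinset (fun j => range (k j + 1)),
        (∏ j, ((n + x j - 1).choose (x j) : ℤ)) * (n - ∑ j, (x j : ℤ))
      = n * (∏ j, ((n + k j).choose (k j) : ℤ)) * (n + 1 - ∑ j, (k j : ℤ)) := by
  have hockey (j : ι) :
      ∑ m ∈ range (k j + 1), ((n + m - 1).choose m : ℤ) = (n + k j).choose (k j) := by
    exact_mod_cast Nat.sum_range_add_sub_one_choose n (k j)
  have weighted (j : ι) : ((n : ℤ) + 1) * ∑ m ∈ range (k j + 1), (m : ℤ) * (n + m - 1).choose m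
      = n * (k j * (n + k j).choose (k j)) := by
    exact_mod_cast Nat.succ_mul_sum_range_mul_add_sub_one_choose n (k j)
  have total : ∑ x ∈ Fintype.piFinset (fun j => range (k j + 1)),
        ∏ j, ((n + x j - 1).choose (x j) : ℤ) = ∏ j, ((n + k j).choose (k j) : ℤ) := by
    rw [← prod_univ_sum (fun j => range (k j + 1)) (fun _ m => ((n + m - 1).choose m : ℤ))]
    exact prod_congr rfl fun j _ => hockey j
  have moment (j : ι) : ((n : ℤ) + 1) * ∑ x ∈ Fintype.piFinset (fun j => range (k j + 1)),
        (x j : ℤ) * ∏ i, ((n + x i - 1).choose (x i) : ℤ)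
      = n * (k j * ∏ i, ((n + k i).choose (k i) : ℤ)) := by
    rw [sum_piFinset_mul_prod (fun j => range (k j + 1)) (fun _ m => ((n + m - 1).choose m : ℤ))
      (fun m => (m : ℤ)), ← mul_assoc, weighted, ← mul_prod_erase univ _ (mem_univ j)]
    simp only [hockey]
    ring
  have expand : ∑ x ∈ Fintype.piFinset (fun j => range (k j + 1)),
        (∏ j, ((n + x j - 1).choose (x j) : ℤ)) * (n - ∑ j, (x j : ℤ))
      = n * ∑ x ∈ Fintype.piFinset (fun j => range (k j + 1)),
          ∏ j, ((n + x j - 1).choose (x j) : ℤ)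
        - ∑ j, ∑ x ∈ Fintype.piFinset (fun j => range (k j + 1)),
          (x j : ℤ) * ∏ i, ((n + x i - 1).choose (x i) : ℤ) := by
    rw [sum_comm, mul_sum, ← sum_sub_distrib]
    refine sum_congr rfl fun x _ => ?_
    rw [mul_sub, ← sum_mul]
    ring
  rw [expand, total, mul_sub, mul_sum, sum_congr rfl fun j _ => moment j, ← mul_sum, ← sum_mul]
  ring

namespace FussCatalan

variable {ι : Type*} [Fintype ι] {B : ℕ → (ι → ℕ) → ℕ}

theorem natCast_mul_eq_of_sum_eq (hzero : ∀ n k, n ≤ ∑ j, k j → B n k = 0) {n : ℕ} {k : ι → ℕ}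
    (hk : ∑ i, k i = n) :
    (n : ℤ) * B n k = (∏ i, ((n + k i - 1).choose (k i) : ℤ)) * (n - ∑ i, (k i : ℤ)) := by
  rw [hzero n k hk.ge, ← Nat.cast_sum, hk]
  simp

theorem natCast_mul_eq_prod_choose_mul_sub [DecidableEq ι] (hB1 : B 1 0 = 1)
    (hrec : ∀ n k, 1 < n → ∑ j, k j < n →
      B n k = ∑ i ∈ Fintype.piFinset (fun j => range (k j + 1)), B (n - 1) i)
    (hzero : ∀ n k, n ≤ ∑ j, k j → B n k = 0) {n : ℕ} (hn : 1 ≤ n) {k : ι → ℕ}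
    (hk : ∑ i, k i ≤ n) :
    (n : ℤ) * B n k = (∏ i, ((n + k i - 1).choose (k i) : ℤ)) * (n - ∑ i, (k i : ℤ)) := by
  induction n, hn using Nat.le_induction generalizing k with
  | base =>
    rcases hk.lt_or_eq with hk | hk
    · obtain rfl : k = 0 := funext fun i => sum_eq_zero_iff.mp (by omega) i (mem_univ i)
      simp [hB1]
    · exact natCast_mul_eq_of_sum_eq hzero hk
  | succ n hn ih =>
    rcases hk.lt_or_eq with hk | hk
    · refine mul_left_cancel₀ (by positivity : (n : ℤ) ≠ 0) ?_
      rw [hrec (n + 1) k (by omega) hk, Nat.add_sub_cancel]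
      push_cast
      have hbox {x} (hx : x ∈ Fintype.piFinset fun j => range (k j + 1)) : ∑ i, x i ≤ n :=
        (sum_le_sum_of_mem_piFinset_range hx).trans (Nat.lt_succ_iff.mp hk)
      rw [mul_left_comm, mul_sum, sum_congr rfl fun x hx => ih (hbox hx),
        succ_mul_sum_piFinset_prod_choose_mul_sub]
      simp only [Nat.add_right_comm n 1, Nat.add_sub_cancel]
      ring
    · exact natCast_mul_eq_of_sum_eq hzero hk

end FussCatalan

theorem fuss_catalan_simplex_closed_formula_general
    (p : ℕ)
    (B : ℕ → (Fin (p - 1) → ℕ) → ℕ)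
    (hB1 : B 1 0 = 1)
    (hrec : ∀ n (k : Fin (p - 1) → ℕ), 1 < n → (∑ j, k j) < n →
      B n k = ∑ i ∈ Fintype.piFinset (fun j => Finset.range (k j + 1)), B (n - 1) i)
    (hzero : ∀ n (k : Fin (p - 1) → ℕ), n ≤ (∑ j, k j) → B n k = 0) :
    ∀ n : ℕ, ∀ k : Fin (p - 1) → ℕ, 1 ≤ n → (∑ i, k i) < n →
      n * B n k
        = (∏ i, Nat.choose (n + k i - 1) (k i)) * (n - ∑ i, k i) := by
  intro n k hn hk
  zify [hk.le]
  exact FussCatalan.natCast_mul_eq_prod_choose_mul_sub hB1 hrec hzero hn hk.le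

/-- Explicit formula for the `p`-dimensional Fuss–Catalan array: for
`n ≥ 1` and tuples `k` with `∑ k_i < n`,
`n * B_p n k = (∏_i binom(n + k_i - 1, k_i)) * (n - ∑_i k_i)`. -/
theorem fuss_catalan_simplex_closed_formula
    (p : ℕ) (hp : 2 ≤ p)
    (B : ℕ → (Fin (p - 1) → ℕ) → ℕ)
    (hB1 : B 1 0 = 1)
    (hrec : ∀ n (k : Fin (p - 1) → ℕ), 1 < n → (∑ j, k j) < n →
      B n k = ∑ i ∈ Fintype.piFinset (fun j => Finset.range (k j + 1)), B (n - 1) i)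
    (hzero : ∀ n (k : Fin (p - 1) → ℕ), n ≤ (∑ j, k j) → B n k = 0) :
    ∀ n : ℕ, ∀ k : Fin (p - 1) → ℕ, 1 ≤ n → (∑ i, k i) < n →
      n * B n k
        = (∏ i, Nat.choose (n + k i - 1) (k i)) * (n - ∑ i, k i) :=
  fuss_catalan_simplex_closed_formula_general p B hB1 hrec hzero
end
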